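/- arXiv:2104.12584 — 6 statements merged into one kernel-verified Lean document; each statement's English description precedes it below -/
import Mathlib

section
/- Let a¹,…,aᵏ ∈ ℝⁿ_{≥0}∖{0} be finitely many nonzero vectors with nonnegative coordinates, let c₁,…,cₖ > 0, and set q(ξ) := Σ_{l=1}^k c_l · ∏_{i=1}^n ξᵢ^{aˡᵢ} for ξ ∈ (0,1)ⁿ. Then for every Z ∈ ℝⁿ with all Zᵢ > 0: lim_{α→0⁺} αⁿ · ∫_{(0,1)ⁿ} e^{−q(ξ)} · ∏_{i=1}^n ξᵢ^{αZᵢ−1} dξ = 1/(Z₁Z₂⋯Zₙ). -/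
open MeasureTheory Real

private lemma cube_meas {n : ℕ} :
    MeasurableSet (Set.univ.pi fun _ : Fin n => Set.Ioo (0 : ℝ) 1) :=
  MeasurableSet.univ_pi fun _ => measurableSet_Ioo

private lemma indicator_pi_prod {n : ℕ} (f : Fin n → ℝ → ℝ) (ξ : Fin n → ℝ) :
    (Set.univ.pi fun _ : Fin n => Set.Ioo (0 : ℝ) 1).indicator
      (fun ξ => ∏ i, f i (ξ i)) ξ = ∏ i, (Set.Ioo (0 : ℝ) 1).indicator (f i) (ξ i) := by
  by_cases h : ξ ∈ Set.univ.pi fun _ : Fin n => Set.Ioo (0 : ℝ) 1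
  · rw [Set.indicator_of_mem h]
    exact Finset.prod_congr rfl fun i _ =>
      (Set.indicator_of_mem (h i trivial) _).symm
  · rw [Set.indicator_of_notMem h]
    rw [Set.mem_pi] at h
    push_neg at h
    obtain ⟨i, -, hi⟩ := h
    exact (Finset.prod_eq_zero (Finset.mem_univ i)
      (Set.indicator_of_notMem hi _)).symm

private lemma integrableOn_rpow {p : ℝ} (hp : 0 < p) :
    IntegrableOn (fun x : ℝ => x ^ (p - 1)) (Set.Ioo 0 1) := by
  have h : IntervalIntegrable (fun x : ℝ => x ^ (p - 1)) volume 0 1 :=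
    intervalIntegral.intervalIntegrable_rpow' (by linarith)
  exact ((intervalIntegrable_iff_integrableOn_Ioc_of_le zero_le_one).mp h).mono_set
    Set.Ioo_subset_Ioc_self

open intervalIntegral in
private lemma integral_rpow_Ioo {p : ℝ} (hp : 0 < p) :
    ∫ x in Set.Ioo (0 : ℝ) 1, x ^ (p - 1) = p⁻¹ := by
  have h := integral_rpow (a := 0) (b := 1) (r := p - 1) (Or.inl (by linarith))
  rw [← integral_Ioc_eq_integral_Ioo, ← intervalIntegral.integral_of_le zero_le_one, h,
    sub_add_cancel]
  simp [Real.zero_rpow hp.ne', one_div]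

private lemma integrableOn_cube {n : ℕ} {p : Fin n → ℝ} (hp : ∀ i, 0 < p i) :
    IntegrableOn (fun ξ : Fin n → ℝ => ∏ i, ξ i ^ (p i - 1))
      (Set.univ.pi fun _ => Set.Ioo (0 : ℝ) 1) := by
  have heq : (Set.univ.pi fun _ : Fin n => Set.Ioo (0 : ℝ) 1).indicator
      (fun ξ : Fin n → ℝ => ∏ i, ξ i ^ (p i - 1))
      = fun ξ => ∏ i, (Set.Ioo (0 : ℝ) 1).indicator (fun x => x ^ (p i - 1)) (ξ i) :=
    funext fun ξ => indicator_pi_prod (fun i x => x ^ (p i - 1)) ξ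
  have h2 : Integrable (fun ξ : Fin n → ℝ =>
      ∏ i, (Set.Ioo (0 : ℝ) 1).indicator (fun x => x ^ (p i - 1)) (ξ i)) :=
    Integrable.fintype_prod (𝕜 := ℝ) fun i =>
      (integrable_indicator_iff measurableSet_Ioo).2 (integrableOn_rpow (hp i))
  rw [← heq] at h2
  exact (integrable_indicator_iff cube_meas).1 h2

private lemma integral_cube {n : ℕ} {p : Fin n → ℝ} (hp : ∀ i, 0 < p i) :
    ∫ ξ in Set.univ.pi fun _ : Fin n => Set.Ioo (0 : ℝ) 1, ∏ i, ξ i ^ (p i - 1)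
      = ∏ i, (p i)⁻¹ := by
  rw [← integral_indicator cube_meas]
  simp_rw [indicator_pi_prod (fun i x => x ^ (p i - 1))]
  rw [MeasureTheory.integral_fintype_prod_volume_eq_prod
    (f := fun i x => (Set.Ioo (0 : ℝ) 1).indicator (fun t => t ^ (p i - 1)) x)]
  exact Finset.prod_congr rfl fun i _ => by
    rw [integral_indicator measurableSet_Ioo, integral_rpow_Ioo (hp i)]

/-- For `q(ξ) = Σ_l c_l ∏ᵢ ξᵢ^{aˡᵢ}` with positive coefficients and nonzero nonnegative
exponent vectors, and `Z` with positive coordinates,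
`lim_{α→0⁺} αⁿ ∫_{(0,1)ⁿ} e^{−q(ξ)} ∏ᵢ ξᵢ^{αZᵢ−1} dξ = 1/(Z₁⋯Zₙ)`. -/
theorem stmt_2 (n k : ℕ) (a : Fin k → Fin n → ℝ)
    (ha : ∀ l, (∀ i, 0 ≤ a l i) ∧ a l ≠ 0)
    (c : Fin k → ℝ) (hc : ∀ l, 0 < c l)
    (Z : Fin n → ℝ) (hZ : ∀ i, 0 < Z i) :
    Filter.Tendsto
      (fun α : ℝ => α ^ n *
        ∫ ξ in Set.univ.pi fun _ : Fin n => Set.Ioo (0 : ℝ) 1,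
          Real.exp (-∑ l, c l * ∏ i, ξ i ^ a l i) * ∏ i, ξ i ^ (α * Z i - 1))
      (nhdsWithin 0 (Set.Ioi 0)) (nhds (1 / ∏ i, Z i)) := by
  set cube : Set (Fin n → ℝ) := Set.univ.pi fun _ : Fin n => Set.Ioo (0 : ℝ) 1 with hcube
  -- the error term
  set err : ℝ → ℝ := fun α => ∑ l, c l * ∏ i, α * (α * Z i + a l i)⁻¹ with herr_def
  -- Bounds for positive α
  have key : ∀ α : ℝ, 0 < α →
      1 / ∏ i, Z i - err α ≤ (α ^ n *
        ∫ ξ in cube, Real.exp (-∑ l, c l * ∏ i, ξ i ^ a l i) * ∏ i, ξ i ^ (α * Z i - 1))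
      ∧ (α ^ n *
        ∫ ξ in cube, Real.exp (-∑ l, c l * ∏ i, ξ i ^ a l i) * ∏ i, ξ i ^ (α * Z i - 1))
        ≤ 1 / ∏ i, Z i := by
    intro α hα
    have hpZ : ∀ i, 0 < α * Z i := fun i => mul_pos hα (hZ i)
    have hpQ : ∀ l, ∀ i, 0 < α * Z i + a l i := fun l i =>
      add_pos_of_pos_of_nonneg (hpZ i) ((ha l).1 i)
    -- integrability of P
    have hP : IntegrableOn (fun ξ : Fin n → ℝ => ∏ i, ξ i ^ (α * Z i - 1)) cube :=
      integrableOn_cube hpZ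
    have hQ : ∀ l, IntegrableOn
        (fun ξ : Fin n → ℝ => ∏ i, ξ i ^ (α * Z i + a l i - 1)) cube := fun l =>
      integrableOn_cube (hpQ l)
    -- positivity of coordinates on cube
    have hmem : ∀ ξ ∈ cube, ∀ i, 0 < ξ i ∧ ξ i < 1 := by
      intro ξ hξ i; exact ⟨(hξ i trivial).1, (hξ i trivial).2⟩
    -- pointwise facts on cube
    have hPpos : ∀ ξ ∈ cube, 0 ≤ ∏ i, ξ i ^ (α * Z i - 1) := fun ξ hξ =>
      Finset.prod_nonneg fun i _ => Real.rpow_nonneg (hmem ξ hξ i).1.le _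
    have hqnn : ∀ ξ ∈ cube, 0 ≤ ∑ l, c l * ∏ i, ξ i ^ a l i := fun ξ hξ =>
      Finset.sum_nonneg fun l _ => mul_nonneg (hc l).le
        (Finset.prod_nonneg fun i _ => Real.rpow_nonneg (hmem ξ hξ i).1.le _)
    have hexple : ∀ ξ ∈ cube,
        Real.exp (-∑ l, c l * ∏ i, ξ i ^ a l i) ≤ 1 := fun ξ hξ =>
      Real.exp_le_one_iff.2 (neg_nonpos.2 (hqnn ξ hξ))
    -- continuity of the integrand on the cube, hence measurability
    have hcont : ∀ ξ ∈ cube, ContinuousAt (fun ξ : Fin n → ℝ =>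
        Real.exp (-∑ l, c l * ∏ i, ξ i ^ a l i) * ∏ i, ξ i ^ (α * Z i - 1)) ξ := by
      intro ξ hξ
      have hfac : ∀ r : Fin n → ℝ, ContinuousAt (fun ξ : Fin n → ℝ => ∏ i, ξ i ^ r i) ξ := by
        intro r
        exact tendsto_finset_prod _ fun i _ =>
          Filter.Tendsto.comp (Real.continuousAt_rpow_const (ξ i) (r i)
            (Or.inl (hmem ξ hξ i).1.ne')) ((continuous_apply i).continuousAt)
      have hq : ContinuousAt (fun ξ : Fin n → ℝ => ∑ l, c l * ∏ i, ξ i ^ a l i) ξ :=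
        tendsto_finset_sum _ fun l _ => (hfac (a l)).const_mul (c l)
      exact ((Real.continuous_exp.continuousAt.comp hq.neg)).mul (hfac _)
    have hEPmeas : AEStronglyMeasurable (fun ξ : Fin n → ℝ =>
        Real.exp (-∑ l, c l * ∏ i, ξ i ^ a l i) * ∏ i, ξ i ^ (α * Z i - 1))
        (volume.restrict cube) :=
      ContinuousOn.aestronglyMeasurable
        (fun ξ hξ => (hcont ξ hξ).continuousWithinAt) cube_meas
    -- integrability of the main integrand
    have hEP : IntegrableOn (fun ξ : Fin n → ℝ =>
        Real.exp (-∑ l, c l * ∏ i, ξ i ^ a l i) * ∏ i, ξ i ^ (α * Z i - 1)) cube := by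
      refine MeasureTheory.Integrable.mono hP hEPmeas ?_
      filter_upwards [ae_restrict_mem cube_meas] with ξ hξ
      rw [Real.norm_eq_abs, Real.norm_eq_abs,
        abs_of_nonneg (mul_nonneg (Real.exp_pos _).le (hPpos ξ hξ)),
        abs_of_nonneg (hPpos ξ hξ)]
      exact mul_le_of_le_one_left (hPpos ξ hξ) (hexple ξ hξ)
    -- upper bound on the integral
    have hupper : (∫ ξ in cube,
        Real.exp (-∑ l, c l * ∏ i, ξ i ^ a l i) * ∏ i, ξ i ^ (α * Z i - 1))
        ≤ ∏ i, (α * Z i)⁻¹ := by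
      rw [← integral_cube hpZ]
      exact setIntegral_mono_on hEP hP cube_meas fun ξ hξ =>
        mul_le_of_le_one_left (hPpos ξ hξ) (hexple ξ hξ)
    -- lower bound on the integral
    have hlower : (∏ i, (α * Z i)⁻¹) - ∑ l, c l * ∏ i, (α * Z i + a l i)⁻¹
        ≤ ∫ ξ in cube,
          Real.exp (-∑ l, c l * ∏ i, ξ i ^ a l i) * ∏ i, ξ i ^ (α * Z i - 1) := by
      have hsumint : IntegrableOn (fun ξ : Fin n → ℝ =>
          ∑ l, c l * ∏ i, ξ i ^ (α * Z i + a l i - 1)) cube :=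
        integrable_finset_sum _ fun l _ => ((hQ l).const_mul (c l))
      have hdiff : (∫ ξ in cube, (∏ i, ξ i ^ (α * Z i - 1))
            - Real.exp (-∑ l, c l * ∏ i, ξ i ^ a l i) * ∏ i, ξ i ^ (α * Z i - 1))
          ≤ ∫ ξ in cube, ∑ l, c l * ∏ i, ξ i ^ (α * Z i + a l i - 1) := by
        refine setIntegral_mono_on (hP.sub hEP) hsumint cube_meas fun ξ hξ => ?_
        have hqb : 1 - Real.exp (-∑ l, c l * ∏ i, ξ i ^ a l i)
            ≤ ∑ l, c l * ∏ i, ξ i ^ a l i := by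
          have := Real.add_one_le_exp (-∑ l, c l * ∏ i, ξ i ^ a l i)
          linarith
        have h1 : (∏ i, ξ i ^ (α * Z i - 1))
              - Real.exp (-∑ l, c l * ∏ i, ξ i ^ a l i) * ∏ i, ξ i ^ (α * Z i - 1)
            = (1 - Real.exp (-∑ l, c l * ∏ i, ξ i ^ a l i)) * ∏ i, ξ i ^ (α * Z i - 1) := by
          ring
        rw [h1]
        calc (1 - Real.exp (-∑ l, c l * ∏ i, ξ i ^ a l i)) * ∏ i, ξ i ^ (α * Z i - 1)
            ≤ (∑ l, c l * ∏ i, ξ i ^ a l i) * ∏ i, ξ i ^ (α * Z i - 1) :=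
              mul_le_mul_of_nonneg_right hqb (hPpos ξ hξ)
          _ = ∑ l, c l * ∏ i, ξ i ^ (α * Z i + a l i - 1) := by
              rw [Finset.sum_mul]
              refine Finset.sum_congr rfl fun l _ => ?_
              rw [mul_assoc, ← Finset.prod_mul_distrib]
              congr 1
              refine Finset.prod_congr rfl fun i _ => ?_
              rw [← Real.rpow_add (hmem ξ hξ i).1]
              congr 1; ring
      have hsumval : (∫ ξ in cube, ∑ l, c l * ∏ i, ξ i ^ (α * Z i + a l i - 1))
          = ∑ l, c l * ∏ i, (α * Z i + a l i)⁻¹ := by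
        rw [integral_finset_sum _ fun l _ => ((hQ l).const_mul (c l))]
        refine Finset.sum_congr rfl fun l _ => ?_
        rw [integral_const_mul, integral_cube (hpQ l)]
      have hPI : (∫ ξ in cube, ∏ i, ξ i ^ (α * Z i - 1)) = ∏ i, (α * Z i)⁻¹ :=
        integral_cube hpZ
      rw [integral_sub hP hEP, hsumval, hPI] at hdiff
      linarith
    -- multiply by α^n
    have hprodα : α ^ n * ∏ i, (α * Z i)⁻¹ = 1 / ∏ i, Z i := by
      have : α ^ n = ∏ _i : Fin n, α := by
        simp [Finset.prod_const, Finset.card_fin]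
      rw [this, ← Finset.prod_mul_distrib]
      rw [one_div, ← Finset.prod_inv_distrib]
      refine Finset.prod_congr rfl fun i _ => ?_
      rw [mul_inv, ← mul_assoc, mul_inv_cancel₀ hα.ne', one_mul]
    have hprodα2 : ∀ l, α ^ n * ∏ i, (α * Z i + a l i)⁻¹
        = ∏ i, α * (α * Z i + a l i)⁻¹ := by
      intro l
      have : α ^ n = ∏ _i : Fin n, α := by
        simp [Finset.prod_const, Finset.card_fin]
      rw [this, ← Finset.prod_mul_distrib]
    constructor
    · have := mul_le_mul_of_nonneg_left hlower (le_of_lt (pow_pos hα n))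
      calc 1 / ∏ i, Z i - err α
          = α ^ n * ((∏ i, (α * Z i)⁻¹) - ∑ l, c l * ∏ i, (α * Z i + a l i)⁻¹) := by
            rw [mul_sub, hprodα, Finset.mul_sum, herr_def]
            congr 1
            refine Finset.sum_congr rfl fun l _ => ?_
            rw [← hprodα2 l]; ring
        _ ≤ _ := this
    · have := mul_le_mul_of_nonneg_left hupper (le_of_lt (pow_pos hα n))
      rw [hprodα] at this
      exact this
  -- err tends to 0
  have herr : Filter.Tendsto err (nhdsWithin 0 (Set.Ioi 0)) (nhds 0) := by
    have hterm : ∀ l, Filter.Tendsto (fun α => ∏ i, α * (α * Z i + a l i)⁻¹)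
        (nhdsWithin 0 (Set.Ioi 0)) (nhds 0) := by
      intro l
      set L : Fin n → ℝ := fun i => if a l i = 0 then (Z i)⁻¹ else 0 with hL
      have hfac : ∀ i, Filter.Tendsto (fun α : ℝ => α * (α * Z i + a l i)⁻¹)
          (nhdsWithin 0 (Set.Ioi 0)) (nhds (L i)) := by
        intro i
        by_cases h0 : a l i = 0
        · have : ∀ α ∈ Set.Ioi (0 : ℝ), α * (α * Z i + a l i)⁻¹ = (Z i)⁻¹ := by
            intro α hα
            rw [h0, add_zero, mul_inv, ← mul_assoc,
              mul_inv_cancel₀ (ne_of_gt hα), one_mul]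
          rw [hL]; simp only [if_pos h0]
          refine Filter.Tendsto.congr' ?_ tendsto_const_nhds
          filter_upwards [self_mem_nhdsWithin] with α hα
          exact (this α hα).symm
        · have hai : 0 < a l i := lt_of_le_of_ne ((ha l).1 i) (Ne.symm h0)
          have h1 : Filter.Tendsto (fun α : ℝ => α * Z i + a l i) (nhds 0)
              (nhds (0 * Z i + a l i)) :=
            (Filter.tendsto_id.mul_const (Z i)).add_const (a l i)
          have h2 : Filter.Tendsto (fun α : ℝ => α * (α * Z i + a l i)⁻¹) (nhds 0)
              (nhds (0 * (0 * Z i + a l i)⁻¹)) := by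
            refine Filter.tendsto_id.mul (h1.inv₀ ?_)
            simp [hai.ne']
          rw [hL]; simp only [if_neg h0]
          have h4 : Filter.Tendsto (fun α : ℝ => α * (α * Z i + a l i)⁻¹) (nhds 0)
              (nhds 0) := by simpa using h2
          exact h4.mono_left nhdsWithin_le_nhds
      have hprod : Filter.Tendsto (fun α => ∏ i, α * (α * Z i + a l i)⁻¹)
          (nhdsWithin 0 (Set.Ioi 0)) (nhds (∏ i, L i)) :=
        tendsto_finset_prod _ fun i _ => hfac i
      have hzero : (∏ i, L i) = 0 := by
        obtain ⟨i₀, hi₀⟩ := Function.ne_iff.mp (ha l).2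
        simp only [Pi.zero_apply] at hi₀
        exact Finset.prod_eq_zero (Finset.mem_univ i₀) (by rw [hL]; simp [hi₀])
      rwa [hzero] at hprod
    have := tendsto_finset_sum (Finset.univ : Finset (Fin k))
      (fun l _ => ((hterm l).const_mul (c l)))
    simpa using this
  -- squeeze
  have hlowlim : Filter.Tendsto (fun α => 1 / ∏ i, Z i - err α)
      (nhdsWithin 0 (Set.Ioi 0)) (nhds (1 / ∏ i, Z i)) := by
    have := Filter.Tendsto.sub (tendsto_const_nhds (x := 1 / ∏ i, Z i)
      (f := nhdsWithin (0:ℝ) (Set.Ioi 0))) herr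
    simpa using this
  refine tendsto_of_tendsto_of_tendsto_of_le_of_le' hlowlim tendsto_const_nhds ?_ ?_
  · filter_upwards [self_mem_nhdsWithin] with α hα
    exact (key α hα).1
  · filter_upwards [self_mem_nhdsWithin] with α hα
    exact (key α hα).2
end

section
/- Let a¹,…,aᵏ ∈ ℝⁿ_{≥0}∖{0} be finitely many nonzero vectors with nonnegative coordinates, let c₁,…,cₖ > 0, and set q(ξ) := Σ_{l=1}^k c_l · ∏_{i=1}^n ξᵢ^{aˡᵢ} for ξ ∈ (0,1)ⁿ. Then for every Z ∈ ℝⁿ with all Zᵢ > 0: lim_{α→0⁺} αⁿ · ∫_{(0,1)ⁿ} (1 − e^{−q(ξ)}) · ∏_{i=1}^n ξᵢ^{αZᵢ−1} dξ = 0. -/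
open MeasureTheory Real

lemma aux_one_dim_integrable {r : ℝ} (hr : -1 < r) :
    MeasureTheory.IntegrableOn (fun x : ℝ => x ^ r) (Set.Ioo 0 1) := by
  have h := (intervalIntegral.intervalIntegrable_rpow' (a := 0) (b := 1) hr)
  rw [intervalIntegrable_iff_integrableOn_Ioc_of_le zero_le_one] at h
  exact h.mono_set Set.Ioo_subset_Ioc_self

lemma aux_one_dim_integral {r : ℝ} (hr : -1 < r) :
    ∫ x in Set.Ioo (0:ℝ) 1, x ^ r = (r + 1)⁻¹ := by
  have h1 : r + 1 ≠ 0 := by linarith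
  rw [← MeasureTheory.integral_Ioc_eq_integral_Ioo,
    ← intervalIntegral.integral_of_le zero_le_one,
    integral_rpow (Or.inl hr), Real.one_rpow, Real.zero_rpow h1]
  field_simp
  norm_num

lemma aux_prod_rpow (n : ℕ) (p : Fin n → ℝ) (hp : ∀ i, -1 < p i) :
    MeasureTheory.IntegrableOn (fun ξ : Fin n → ℝ => ∏ i, ξ i ^ p i)
      (Set.univ.pi fun _ => Set.Ioo (0:ℝ) 1) ∧
    ∫ ξ in Set.univ.pi fun _ : Fin n => Set.Ioo (0:ℝ) 1, ∏ i, ξ i ^ p i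
      = ∏ i, (p i + 1)⁻¹ := by
  set g : Fin n → ℝ → ℝ := fun i => (Set.Ioo (0:ℝ) 1).indicator (fun x => x ^ p i) with hg
  have hS : MeasurableSet (Set.univ.pi fun _ : Fin n => Set.Ioo (0:ℝ) 1) :=
    MeasurableSet.univ_pi fun _ => measurableSet_Ioo
  have hgi : ∀ i, Integrable (g i) := fun i =>
    (integrable_indicator_iff measurableSet_Ioo).2 (aux_one_dim_integrable (hp i))
  have key : (Set.univ.pi fun _ : Fin n => Set.Ioo (0:ℝ) 1).indicator
      (fun ξ => ∏ i, ξ i ^ p i) = fun ξ => ∏ i, g i (ξ i) := by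
    funext ξ
    by_cases h : ξ ∈ Set.univ.pi fun _ : Fin n => Set.Ioo (0:ℝ) 1
    · rw [Set.indicator_of_mem h]
      exact Finset.prod_congr rfl fun i _ => by
        simp [hg, Set.indicator_of_mem (h i (Set.mem_univ i))]
    · rw [Set.indicator_of_notMem h]
      rw [Set.mem_pi] at h; push_neg at h
      obtain ⟨i, -, hi⟩ := h
      exact (Finset.prod_eq_zero (Finset.mem_univ i)
        (by simp [hg, Set.indicator_of_notMem hi])).symm
  have hInt : Integrable (fun ξ : Fin n → ℝ => ∏ i, g i (ξ i)) :=
    Integrable.fintype_prod (𝕜 := ℝ) hgi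
  refine ⟨(integrable_indicator_iff hS).1 (key ▸ hInt), ?_⟩
  rw [← integral_indicator hS, key,
    MeasureTheory.volume_pi, MeasureTheory.integral_fintype_prod_eq_prod (f := g)]
  refine Finset.prod_congr rfl fun i _ => ?_
  rw [hg]
  rw [MeasureTheory.integral_indicator measurableSet_Ioo]
  exact aux_one_dim_integral (hp i)

/-- For `q(ξ) = Σ_l c_l ∏ᵢ ξᵢ^{aˡᵢ}` with positive coefficients and nonzero nonnegative
exponent vectors, and `Z` with positive coordinates,
`lim_{α→0⁺} αⁿ ∫_{(0,1)ⁿ} (1 − e^{−q(ξ)}) ∏ᵢ ξᵢ^{αZᵢ−1} dξ = 0`. -/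
theorem stmt_3 (n k : ℕ) (a : Fin k → Fin n → ℝ)
    (ha : ∀ l, (∀ i, 0 ≤ a l i) ∧ a l ≠ 0)
    (c : Fin k → ℝ) (hc : ∀ l, 0 < c l)
    (Z : Fin n → ℝ) (hZ : ∀ i, 0 < Z i) :
    Filter.Tendsto
      (fun α : ℝ => α ^ n *
        ∫ ξ in Set.univ.pi fun _ : Fin n => Set.Ioo (0 : ℝ) 1,
          (1 - Real.exp (-∑ l, c l * ∏ i, ξ i ^ a l i)) * ∏ i, ξ i ^ (α * Z i - 1))
      (nhdsWithin 0 (Set.Ioi 0)) (nhds 0) := by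
  set S := Set.univ.pi fun _ : Fin n => Set.Ioo (0:ℝ) 1 with hSdef
  have hS : MeasurableSet S := MeasurableSet.univ_pi fun _ => measurableSet_Ioo
  have hchoose : ∀ l, ∃ i, 0 < a l i := by
    intro l
    by_contra h; push_neg at h
    exact (ha l).2 (funext fun i => le_antisymm (h i) ((ha l).1 i))
  choose i0 hi0 using hchoose
  set C : ℝ := ∑ l, c l * ((a l (i0 l))⁻¹ * ∏ i ∈ Finset.univ.erase (i0 l), (Z i)⁻¹) with hC
  set F : ℝ → ℝ := fun α => α ^ n *
    ∫ ξ in S, (1 - Real.exp (-∑ l, c l * ∏ i, ξ i ^ a l i)) * ∏ i, ξ i ^ (α * Z i - 1)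
    with hF
  have key : ∀ α : ℝ, 0 < α → 0 ≤ F α ∧ F α ≤ α * C := by
    intro α hα
    -- basic positivity on S
    have hmem : ∀ ξ : Fin n → ℝ, ξ ∈ S → ∀ i, 0 < ξ i := by
      intro ξ hξ i; exact (hξ i (Set.mem_univ i)).1
    set f : (Fin n → ℝ) → ℝ := fun ξ =>
      (1 - Real.exp (-∑ l, c l * ∏ i, ξ i ^ a l i)) * ∏ i, ξ i ^ (α * Z i - 1) with hfdef
    set g : (Fin n → ℝ) → ℝ := fun ξ => ∑ l, c l * ∏ i, ξ i ^ (a l i + α * Z i - 1) with hgdef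
    have hexp : ∀ l, ∀ i : Fin n, (-1 : ℝ) < a l i + α * Z i - 1 := by
      intro l i
      have := mul_pos hα (hZ i)
      have := (ha l).1 i
      linarith
    have hprod := fun l => aux_prod_rpow n (fun i => a l i + α * Z i - 1) (hexp l)
    have hf_nonneg : ∀ ξ ∈ S, 0 ≤ f ξ := by
      intro ξ hξ
      have hq : 0 ≤ ∑ l, c l * ∏ i, ξ i ^ a l i :=
        Finset.sum_nonneg fun l _ => mul_nonneg (hc l).le
          (Finset.prod_nonneg fun i _ => (Real.rpow_pos_of_pos (hmem ξ hξ i) _).le)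
      have h1 : Real.exp (-∑ l, c l * ∏ i, ξ i ^ a l i) ≤ 1 := by
        rw [← Real.exp_zero]
        exact Real.exp_le_exp.2 (by linarith)
      exact mul_nonneg (by linarith)
        (Finset.prod_nonneg fun i _ => (Real.rpow_pos_of_pos (hmem ξ hξ i) _).le)
    have hfg : ∀ ξ ∈ S, f ξ ≤ g ξ := by
      intro ξ hξ
      have hP : 0 ≤ ∏ i, ξ i ^ (α * Z i - 1) :=
        Finset.prod_nonneg fun i _ => (Real.rpow_pos_of_pos (hmem ξ hξ i) _).le
      have h2 : 1 - Real.exp (-∑ l, c l * ∏ i, ξ i ^ a l i)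
          ≤ ∑ l, c l * ∏ i, ξ i ^ a l i := by
        have := Real.add_one_le_exp (-∑ l, c l * ∏ i, ξ i ^ a l i)
        linarith
      calc f ξ ≤ (∑ l, c l * ∏ i, ξ i ^ a l i) * ∏ i, ξ i ^ (α * Z i - 1) :=
            mul_le_mul_of_nonneg_right h2 hP
        _ = g ξ := by
            rw [Finset.sum_mul]
            refine Finset.sum_congr rfl fun l _ => ?_
            rw [mul_assoc, ← Finset.prod_mul_distrib]
            congr 1
            refine Finset.prod_congr rfl fun i _ => ?_
            rw [← Real.rpow_add (hmem ξ hξ i)]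
            ring_nf
    have hg_int : IntegrableOn g S := by
      apply MeasureTheory.integrable_finset_sum
      intro l _
      exact ((hprod l).1).const_mul (c l)
    have hf_meas : Measurable f := by
      apply Measurable.mul
      · apply Measurable.sub measurable_const
        apply Real.measurable_exp.comp
        apply Measurable.neg
        apply Finset.measurable_sum
        intro l _
        apply Measurable.const_mul
        apply Finset.measurable_prod
        intro i _
        fun_prop
      · apply Finset.measurable_prod
        intro i _
        fun_prop
    have hf_int : IntegrableOn f S := by
      refine hg_int.mono' hf_meas.aestronglyMeasurable.restrict ?_
      rw [MeasureTheory.ae_restrict_iff' hS]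
      refine MeasureTheory.ae_of_all _ fun ξ hξ => ?_
      rw [Real.norm_eq_abs, abs_of_nonneg (hf_nonneg ξ hξ)]
      exact hfg ξ hξ
    have hIle : ∫ ξ in S, f ξ ≤ ∫ ξ in S, g ξ :=
      MeasureTheory.setIntegral_mono_on hf_int hg_int hS hfg
    have hgval : ∫ ξ in S, g ξ = ∑ l, c l * ∏ i, (a l i + α * Z i)⁻¹ := by
      rw [hgdef]
      rw [MeasureTheory.integral_finset_sum _ fun l _ => ((hprod l).1).const_mul (c l)]
      refine Finset.sum_congr rfl fun l _ => ?_
      rw [MeasureTheory.integral_const_mul, (hprod l).2]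
      congr 1
      exact Finset.prod_congr rfl fun i _ => by ring_nf
    have hI_nonneg : 0 ≤ ∫ ξ in S, f ξ :=
      MeasureTheory.setIntegral_nonneg hS hf_nonneg
    constructor
    · exact mul_nonneg (pow_nonneg hα.le n) hI_nonneg
    · have h3 : F α ≤ α ^ n * ∑ l, c l * ∏ i, (a l i + α * Z i)⁻¹ := by
        rw [hF]
        exact mul_le_mul_of_nonneg_left (hgval ▸ hIle) (pow_nonneg hα.le n)
      refine h3.trans ?_
      rw [Finset.mul_sum, hC, Finset.mul_sum]
      refine Finset.sum_le_sum fun l _ => ?_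
      have hpow : α ^ n * (c l * ∏ i, (a l i + α * Z i)⁻¹)
          = c l * ∏ i, (α * (a l i + α * Z i)⁻¹) := by
        rw [Finset.prod_mul_distrib, Finset.prod_const, Finset.card_univ, Fintype.card_fin]
        ring
      rw [hpow]
      set b : Fin n → ℝ := fun i => if i = i0 l then α * (a l (i0 l))⁻¹ else (Z i)⁻¹ with hb
      have hd : ∀ i, 0 < a l i + α * Z i := fun i =>
        add_pos_of_nonneg_of_pos ((ha l).1 i) (mul_pos hα (hZ i))
      have hstep : ∏ i, (α * (a l i + α * Z i)⁻¹) ≤ ∏ i, b i := by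
        refine Finset.prod_le_prod (fun i _ => mul_nonneg hα.le (inv_nonneg.2 (hd i).le))
          fun i _ => ?_
        rw [hb]
        by_cases hi : i = i0 l
        · subst hi
          simp only [if_pos rfl]
          exact mul_le_mul_of_nonneg_left
            (inv_anti₀ (hi0 l) (le_add_of_nonneg_right (mul_pos hα (hZ (i0 l))).le)) hα.le
        · simp only [if_neg hi]
          have h5 : α * (a l i + α * Z i)⁻¹ ≤ α * (α * Z i)⁻¹ :=
            mul_le_mul_of_nonneg_left
              (inv_anti₀ (mul_pos hα (hZ i)) (le_add_of_nonneg_left ((ha l).1 i))) hα.le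
          rw [mul_inv, ← mul_assoc, mul_inv_cancel₀ hα.ne', one_mul] at h5
          exact h5
      have hbprod : ∏ i, b i
          = α * ((a l (i0 l))⁻¹ * ∏ i ∈ Finset.univ.erase (i0 l), (Z i)⁻¹) := by
        rw [← Finset.mul_prod_erase Finset.univ b (Finset.mem_univ (i0 l))]
        have hb0 : b (i0 l) = α * (a l (i0 l))⁻¹ := by simp [hb]
        rw [hb0, Finset.prod_congr rfl fun i hi =>
          show b i = (Z i)⁻¹ by simp [hb, (Finset.mem_erase.1 hi).1]]
        ring
      calc c l * ∏ i, (α * (a l i + α * Z i)⁻¹) ≤ c l * ∏ i, b i :=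
            mul_le_mul_of_nonneg_left hstep (hc l).le
        _ = α * (c l * ((a l (i0 l))⁻¹ * ∏ i ∈ Finset.univ.erase (i0 l), (Z i)⁻¹)) := by
            rw [hbprod]; ring
  have hub : Filter.Tendsto (fun α : ℝ => α * C) (nhdsWithin 0 (Set.Ioi 0)) (nhds 0) := by
    have h6 : Filter.Tendsto (fun α : ℝ => α * C) (nhds 0) (nhds 0) := by
      simpa using (continuous_mul_right C).tendsto (0:ℝ)
    exact h6.mono_left nhdsWithin_le_nhds
  exact squeeze_zero' (eventually_nhdsWithin_of_forall fun α hα => (key α hα).1)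
    (eventually_nhdsWithin_of_forall fun α hα => (key α hα).2) hub
end

section
/- Let A₁,…,A_e ⊂ ℤⁿ be finite nonempty sets, let v = (v₁,…,v_e) ∈ ℝᵉ with all v_j > 0, and let u ∈ ℝⁿ. Set P := Σ_{j=1}^e v_j · conv(A_j) (weighted Minkowski sum of convex hulls), assumed to be n-dimensional, and let := ⋃_{j=1}^e {(e_j, ω) : ω ∈ A_j} ⊂ ℝ^{e+n} be the Cayley configuration, where e_j is the j-th standard basis vector of ℝᵉ, and Cone(Â) := Σ_{a∈Â} ℝ_{≥0}·a. Then u lies in the interior of P (in ℝⁿ) if and only if the vector X := (v,u) lies in the interior of Cone(Â) (in ℝ^{e+n}). -/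
open MeasureTheory Real Pointwise

private lemma cayley_mem_iff {n e : ℕ} (A : Fin e → Finset (Fin n → ℤ))
    (w : Fin e → ℝ) (hw : ∀ j, 0 < w j) (x : Fin n → ℝ) :
    (∃ t : Fin e → (Fin n → ℤ) → ℝ, (∀ j ω, 0 ≤ t j ω) ∧
        ((w, x) : (Fin e → ℝ) × (Fin n → ℝ)) = ∑ j, ∑ ω ∈ A j, t j ω •
          ((Pi.single j (1 : ℝ), fun i => (ω i : ℝ)) : (Fin e → ℝ) × (Fin n → ℝ))) ↔
      x ∈ ∑ j, w j • convexHull ℝ ((fun ω : Fin n → ℤ => fun i => (ω i : ℝ)) '' ↑(A j)) := by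
  classical
  set F : (Fin n → ℤ) → (Fin n → ℝ) := fun ω => fun i => (ω i : ℝ) with hF
  constructor
  · rintro ⟨t, ht0, hsum⟩
    have hfst : w = ∑ j, ∑ ω ∈ A j, t j ω • (Pi.single j (1 : ℝ) : Fin e → ℝ) := by
      have h := congrArg Prod.fst hsum
      simpa [Prod.fst_sum] using h
    have hsnd : x = ∑ j, ∑ ω ∈ A j, t j ω • F ω := by
      have h := congrArg Prod.snd hsum
      simpa [Prod.snd_sum] using h
    have hwj : ∀ j, ∑ ω ∈ A j, t j ω = w j := by
      intro j
      have h := congrFun hfst j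
      simp only [Finset.sum_apply, Pi.smul_apply, Pi.single_apply, smul_eq_mul, mul_ite,
        mul_one, mul_zero, Finset.sum_ite_irrel, Finset.sum_const_zero, Finset.sum_ite_eq] at h
      simpa using h.symm
    rw [Set.mem_fintype_sum]
    refine ⟨fun j => w j • ((A j).centerMass (t j) F), fun j => ?_, ?_⟩
    · exact Set.smul_mem_smul_set <| (A j).centerMass_mem_convexHull
        (fun ω _ => ht0 j ω) (by rw [hwj j]; exact hw j) (fun ω hω => ⟨ω, hω, rfl⟩)
    · rw [hsnd]
      refine Finset.sum_congr rfl fun j _ => ?_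
      simp only [Finset.centerMass]
      rw [hwj j, smul_smul, mul_inv_cancel₀ (hw j).ne', one_smul]
  · intro hx
    rw [Set.mem_fintype_sum] at hx
    obtain ⟨g, hg, hgs⟩ := hx
    have key : ∀ j, ∃ s : (Fin n → ℤ) → ℝ, (∀ ω, 0 ≤ s ω) ∧ (∑ ω ∈ A j, s ω) = w j ∧
        (∑ ω ∈ A j, s ω • F ω) = g j := by
      intro j
      obtain ⟨y, hy, hyg⟩ := hg j
      rw [← Finset.coe_image, Finset.mem_convexHull'] at hy
      obtain ⟨c, hc0, hc1, hcy⟩ := hy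
      have hinj : ∀ ω₁ ∈ A j, ∀ ω₂ ∈ A j, F ω₁ = F ω₂ → ω₁ = ω₂ := by
        intro ω₁ _ ω₂ _ h
        funext i
        have h' : (ω₁ i : ℝ) = ω₂ i := congrFun h i
        exact_mod_cast h'
      rw [Finset.sum_image hinj] at hc1 hcy
      refine ⟨fun ω => if ω ∈ A j then w j * c (F ω) else 0, fun ω => ?_, ?_, ?_⟩
      · dsimp only
        split_ifs with h
        · exact mul_nonneg (hw j).le (hc0 _ (Finset.mem_image_of_mem F h))
        · exact le_refl 0
      · dsimp only
        rw [Finset.sum_congr rfl fun ω h => if_pos h, ← Finset.mul_sum, hc1, mul_one]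
      · dsimp only
        rw [Finset.sum_congr rfl fun ω h => by rw [if_pos h, mul_smul]]
        rw [← Finset.smul_sum, hcy, ← hyg]
    choose t ht0 htw htx using key
    refine ⟨t, fun j ω => ht0 j ω, ?_⟩
    rw [Prod.ext_iff]
    constructor
    · simp only [Prod.fst_sum, Prod.smul_fst]
      rw [show (∑ j, ∑ ω ∈ A j, t j ω • (Pi.single j (1:ℝ) : Fin e → ℝ)) = ∑ j, (Pi.single j (w j) : Fin e → ℝ) from
        Finset.sum_congr rfl fun j _ => by
          rw [← Finset.sum_smul, htw j]
          funext i
          simp [Pi.single_apply, mul_ite]]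
      rw [Finset.univ_sum_single w]
    · simp only [Prod.snd_sum, Prod.smul_snd]
      rw [Finset.sum_congr rfl fun j _ => htx j, hgs]


private lemma smul_setSum {E : Type*} [AddCommMonoid E] [Module ℝ E] {ι : Type*} (s : Finset ι)
    (f : ι → Set E) (a : ℝ) : a • (∑ j ∈ s, f j) = ∑ j ∈ s, a • f j := by
  have := Set.image_finset_sum (DistribMulAction.toAddMonoidHom E a) s f
  simpa [Set.image_smul] using this

/-- Cayley trick for interiors: `u` lies in the interior of the weighted Minkowski sum
`P = Σ_j v_j · conv(A_j)` if and only if `X = (v,u)` lies in the interior of the cone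
over the Cayley configuration `Â = ⋃_j {(e_j, ω) : ω ∈ A_j} ⊂ ℝᵉ × ℝⁿ`. -/
theorem stmt_6 (n e : ℕ) (A : Fin e → Finset (Fin n → ℤ)) (hA : ∀ j, (A j).Nonempty)
    (v : Fin e → ℝ) (hv : ∀ j, 0 < v j) (u : Fin n → ℝ)
    (P : Set (Fin n → ℝ))
    (hP : P = ∑ j, v j •
        convexHull ℝ ((fun ω : Fin n → ℤ => fun i => (ω i : ℝ)) '' ↑(A j)))
    (hPdim : (interior P).Nonempty)
    (Cone : Set ((Fin e → ℝ) × (Fin n → ℝ)))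
    (hCone : Cone = {y | ∃ t : Fin e → (Fin n → ℤ) → ℝ, (∀ j ω, 0 ≤ t j ω) ∧
        y = ∑ j, ∑ ω ∈ A j, t j ω •
          ((Pi.single j (1 : ℝ), fun i => (ω i : ℝ)) : (Fin e → ℝ) × (Fin n → ℝ))}) :
    u ∈ interior P ↔ (v, u) ∈ interior Cone := by
  classical
  set F : (Fin n → ℤ) → (Fin n → ℝ) := fun ω => fun i => (ω i : ℝ) with hF
  set Q : Fin e → Set (Fin n → ℝ) := fun j => convexHull ℝ (F '' ↑(A j)) with hQ
  have hQconv : ∀ j, Convex ℝ (Q j) := fun j => convex_convexHull ℝ _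
  have memCone : ∀ (w : Fin e → ℝ), (∀ j, 0 < w j) → ∀ x : Fin n → ℝ,
      ((w, x) ∈ Cone ↔ x ∈ ∑ j, w j • Q j) := by
    intro w hw x
    rw [hCone]
    exact cayley_mem_iff A w hw x
  have hPQ : P = ∑ j, v j • Q j := hP
  have hConeConv : Convex ℝ Cone := by
    rw [hCone]
    rintro p ⟨t1, ht1, rfl⟩ q ⟨t2, ht2, rfl⟩ a b ha hb hab
    refine ⟨fun j ω => a * t1 j ω + b * t2 j ω, fun j ω =>
      add_nonneg (mul_nonneg ha (ht1 j ω)) (mul_nonneg hb (ht2 j ω)), ?_⟩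
    rw [Finset.smul_sum, Finset.smul_sum, ← Finset.sum_add_distrib]
    refine Finset.sum_congr rfl fun j _ => ?_
    rw [Finset.smul_sum, Finset.smul_sum, ← Finset.sum_add_distrib]
    refine Finset.sum_congr rfl fun ω _ => ?_
    rw [smul_smul, smul_smul, ← add_smul]
  obtain ⟨u₀, hu₀⟩ := hPdim
  obtain ⟨ε, hε, hball⟩ := Metric.isOpen_iff.mp isOpen_interior u₀ hu₀
  have hballP : Metric.ball u₀ ε ⊆ P := hball.trans interior_subset
  have hqex : ∀ j, ∃ p, p ∈ Q j := fun j => ⟨F (hA j).choose,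
    subset_convexHull ℝ _ ⟨_, (hA j).choose_spec, rfl⟩⟩
  choose q hqQ using hqex
  set l : ℝ := 1/2 with hl
  have hl0 : (0:ℝ) < l := by norm_num [hl]
  set M : ℝ := ∑ j, ‖q j‖ with hM
  have hM0 : 0 ≤ M := Finset.sum_nonneg fun j _ => norm_nonneg _
  obtain ⟨δ₁, hδ₁, hδ₁le⟩ : ∃ δ₁ > 0, ∀ j, δ₁ ≤ v j / 2 := by
    rcases isEmpty_or_nonempty (Fin e) with h | h
    · exact ⟨1, one_pos, fun j => (h.false j).elim⟩
    · obtain ⟨j₀, -, hj₀⟩ := Finset.exists_min_image Finset.univ (fun j => v j / 2)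
        ⟨h.some, Finset.mem_univ _⟩
      exact ⟨v j₀ / 2, by have := hv j₀; positivity, fun j => hj₀ j (Finset.mem_univ j)⟩
  have hMε : (0:ℝ) < l * ε / (2 * (M + 1)) := by
    apply div_pos (mul_pos hl0 hε); linarith
  set δ : ℝ := min δ₁ (l * ε / (2 * (M + 1))) with hδ
  have hδ0 : 0 < δ := lt_min hδ₁ hMε
  set ρ : ℝ := l * ε / 2 with hρ
  have hρ0 : 0 < ρ := by rw [hρ]; positivity
  set c : (Fin e → ℝ) → (Fin n → ℝ) := fun w => ∑ j, (w j - l * v j) • q j with hc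
  set x₀ : Fin n → ℝ := l • u₀ + c v with hx₀
  set U : Set ((Fin e → ℝ) × (Fin n → ℝ)) := Metric.ball v δ ×ˢ Metric.ball x₀ ρ with hU
  have hUC : U ⊆ Cone := by
    rintro ⟨w, x⟩ ⟨hwball, hxball⟩
    have hwj : ∀ j, |w j - v j| ≤ δ := by
      intro j
      have h1 : dist (w j) (v j) ≤ dist w v := dist_le_pi_dist w v j
      rw [Real.dist_eq] at h1
      exact h1.trans (le_of_lt (Metric.mem_ball.mp hwball))
    have hwl : ∀ j, l * v j ≤ w j := by
      intro j
      have h2 := hδ₁le j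
      have h3 := (abs_le.mp (hwj j)).1
      have h4 : δ ≤ v j / 2 := le_trans (min_le_left _ _) h2
      rw [hl]; nlinarith [hv j]
    have hw0 : ∀ j, 0 < w j := fun j => lt_of_lt_of_le (mul_pos hl0 (hv j)) (hwl j)
    rw [memCone w hw0 x]
    have hsplit : (∑ j, w j • Q j) = (∑ j, (l * v j) • Q j) + ∑ j, (w j - l * v j) • Q j := by
      rw [← Finset.sum_add_distrib]
      refine Finset.sum_congr rfl fun j _ => ?_
      conv_lhs => rw [(by ring : w j = l * v j + (w j - l * v j))]
      exact (hQconv j).add_smul (mul_nonneg hl0.le (hv j).le) (by linarith [hwl j])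
    rw [hsplit]
    have h1 : c w ∈ ∑ j, (w j - l * v j) • Q j :=
      (Set.mem_fintype_sum _ _).2 ⟨fun j => (w j - l * v j) • q j,
        fun j => Set.smul_mem_smul_set (hqQ j), rfl⟩
    have h2 : x - c w ∈ ∑ j, (l * v j) • Q j := by
      have hLP : (∑ j, (l * v j) • Q j) = l • P := by
        rw [hPQ, smul_setSum]
        exact Finset.sum_congr rfl fun j _ => (smul_smul l (v j) (Q j)).symm
      rw [hLP, Set.mem_smul_set_iff_inv_smul_mem₀ (ne_of_gt hl0)]
      have hcv : ‖c v - c w‖ ≤ δ * M := by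
        have hcc : c v - c w = ∑ j, (v j - w j) • q j := by
          simp only [hc, ← Finset.sum_sub_distrib]
          exact Finset.sum_congr rfl fun j _ => by rw [← sub_smul]; ring_nf
        rw [hcc]
        calc ‖∑ j, (v j - w j) • q j‖ ≤ ∑ j, ‖(v j - w j) • q j‖ := norm_sum_le _ _
          _ ≤ ∑ j, δ * ‖q j‖ := Finset.sum_le_sum fun j _ => by
              rw [norm_smul, Real.norm_eq_abs]
              exact mul_le_mul_of_nonneg_right
                (by have := hwj j; rw [abs_sub_comm]; linarith) (norm_nonneg _)
          _ = δ * M := by rw [hM, Finset.mul_sum]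
      have hxx : ‖x - x₀‖ < ρ := by
        have hb := Metric.mem_ball.mp hxball; rwa [dist_eq_norm] at hb
      have hδM : δ * M ≤ l * ε / 2 := by
        have h4 : δ ≤ l * ε / (2 * (M + 1)) := min_le_right _ _
        have h5 : δ * M ≤ (l * ε / (2 * (M + 1))) * (M + 1) := by
          nlinarith [mul_le_mul_of_nonneg_right h4 hM0, hδ0.le, hMε.le]
        have hM1 : M + 1 ≠ 0 := ne_of_gt (by linarith)
        calc δ * M ≤ (l * ε / (2 * (M + 1))) * (M + 1) := h5
          _ = l * ε / 2 := by field_simp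
      have key : ‖x - c w - l • u₀‖ < l * ε := by
        have hrw : x - c w - l • u₀ = (x - x₀) + (c v - c w) := by rw [hx₀]; abel
        rw [hrw]
        calc ‖(x - x₀) + (c v - c w)‖ ≤ ‖x - x₀‖ + ‖c v - c w‖ := norm_add_le _ _
          _ < ρ + δ * M := by linarith
          _ ≤ l * ε := by rw [hρ]; linarith
      apply hballP
      rw [Metric.mem_ball, dist_eq_norm]
      have hrw2 : l⁻¹ • (x - c w) - u₀ = l⁻¹ • (x - c w - l • u₀) := by
        rw [smul_sub l⁻¹ (x - c w) (l • u₀), smul_smul, inv_mul_cancel₀ (ne_of_gt hl0), one_smul]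
      rw [hrw2, norm_smul, Real.norm_eq_abs, abs_of_pos (inv_pos.2 hl0)]
      calc l⁻¹ * ‖x - c w - l • u₀‖ < l⁻¹ * (l * ε) :=
            mul_lt_mul_of_pos_left key (inv_pos.2 hl0)
        _ = ε := by field_simp
    have hmem := Set.add_mem_add h2 h1
    rwa [sub_add_cancel] at hmem
  have hz : ((v, x₀) : (Fin e → ℝ) × (Fin n → ℝ)) ∈ interior Cone :=
    mem_interior.2 ⟨U, hUC, Metric.isOpen_ball.prod Metric.isOpen_ball,
      Set.mem_prod.2 ⟨Metric.mem_ball_self hδ0, Metric.mem_ball_self hρ0⟩⟩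
  constructor
  · intro hu
    obtain ⟨ε₂, hε₂, hball₂⟩ := Metric.isOpen_iff.mp isOpen_interior u hu
    set s : ℝ := ε₂ / (2 * (‖u - x₀‖ + 1)) with hs
    have hs0 : 0 < s := by rw [hs]; positivity
    have h1s : (0:ℝ) < 1 + s := by linarith
    have hy₂P : u + s • (u - x₀) ∈ P := by
      refine interior_subset (hball₂ ?_)
      rw [Metric.mem_ball, dist_eq_norm]
      have hrw : u + s • (u - x₀) - u = s • (u - x₀) := by abel
      rw [hrw, norm_smul, Real.norm_eq_abs, abs_of_pos hs0, hs,
        div_mul_eq_mul_div, div_lt_iff₀ (by positivity)]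
      nlinarith [norm_nonneg (u - x₀)]
    have hyC : ((v, u + s • (u - x₀)) : (Fin e → ℝ) × (Fin n → ℝ)) ∈ Cone := by
      rw [memCone v hv, ← hPQ]; exact hy₂P
    have hab : s / (1 + s) + 1 / (1 + s) = 1 := by field_simp; ring
    have habs : (s / (1+s)) • ((v, x₀) : (Fin e → ℝ) × (Fin n → ℝ))
        + (1 / (1+s)) • ((v, u + s • (u - x₀)) : (Fin e → ℝ) × (Fin n → ℝ)) = (v, u) := by
      rw [Prod.ext_iff]
      constructor
      · show (s/(1+s)) • v + (1/(1+s)) • v = v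
        rw [← add_smul, hab, one_smul]
      · show (s/(1+s)) • x₀ + (1/(1+s)) • (u + s • (u - x₀)) = u
        funext i
        simp only [Pi.add_apply, Pi.smul_apply, Pi.sub_apply, smul_eq_mul]
        field_simp
        ring
    rw [← habs]
    exact hConeConv.combo_interior_self_mem_interior hz hyC
      (div_pos hs0 h1s) (div_pos one_pos h1s).le hab
  · intro h
    have hopen : IsOpen {x : Fin n → ℝ | (v, x) ∈ interior Cone} :=
      isOpen_interior.preimage (Continuous.prodMk_right v)
    have hsub : {x : Fin n → ℝ | (v, x) ∈ interior Cone} ⊆ P := fun x hx => by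
      rw [hPQ]; exact (memCone v hv x).1 (interior_subset hx)
    exact interior_maximal hsub hopen h
end

section
/- Let q₁,…,q_e be Laurent polynomials in n variables with positive coefficients and exponent sets A₁,…,A_e ⊂ ℤⁿ, let v₁,…,v_e > 0, and set P := Σ_{j=1}^e v_j · New(q_j), assumed to be n-dimensional. If u lies in the interior of P, then the Lebesgue integral ∫_{ℝⁿ_{>0}} ∏_{j=1}^e q_j(x)^{−v_j} · ∏_{i=1}^n x_i^{u_i−1} dx is finite. -/
set_option maxHeartbeats 800000


open MeasureTheory Real Pointwise

/-- Convergence of the marginal likelihood integral: if `u` lies in the interior of the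
(`n`-dimensional) weighted Minkowski sum `P = Σ_j v_j · New(q_j)` of Newton polytopes of
Laurent polynomials with positive coefficients, then
`∫_{ℝⁿ_{>0}} ∏_j q_j(x)^{−v_j} ∏ᵢ xᵢ^{uᵢ−1} dx` is finite. -/
theorem stmt_7 (n e : ℕ) (A : Fin e → Finset (Fin n → ℤ)) (hA : ∀ j, (A j).Nonempty)
    (c : Fin e → (Fin n → ℤ) → ℝ) (hc : ∀ j, ∀ ω ∈ A j, 0 < c j ω)
    (q : Fin e → (Fin n → ℝ) → ℝ)
    (hq : ∀ j x, q j x = ∑ ω ∈ A j, c j ω * ∏ i, x i ^ (ω i))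
    (v : Fin e → ℝ) (hv : ∀ j, 0 < v j)
    (P : Set (Fin n → ℝ))
    (hP : P = ∑ j, v j •
        convexHull ℝ ((fun ω : Fin n → ℤ => fun i => (ω i : ℝ)) '' ↑(A j)))
    (hPdim : (interior P).Nonempty)
    (u : Fin n → ℝ) (hu : u ∈ interior P) :
    ∫⁻ x in Set.univ.pi fun _ : Fin n => Set.Ioi (0 : ℝ),
        ENNReal.ofReal ((∏ j, q j x ^ (-v j)) * ∏ i, x i ^ (u i - 1)) < ⊤ := by
  classical
  have hS : MeasurableSet (Set.univ.pi fun _ : Fin n => Set.Ioi (0 : ℝ)) :=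
    MeasurableSet.univ_pi fun _ => measurableSet_Ioi
  -- Step 1: the geometric estimate coming from `u ∈ interior P`.
  obtain ⟨ε, hε, key⟩ :
      ∃ ε > (0 : ℝ), ∀ y : Fin n → ℝ, ∃ ω : Fin e → Fin n → ℤ,
        (∀ j, ω j ∈ A j) ∧
          ∑ i, (u i - ∑ j, v j * (ω j i : ℝ)) * y i ≤ -ε * ∑ i, |y i| := by
    obtain ⟨ε₀, hε₀, hball⟩ := Metric.isOpen_iff.mp isOpen_interior u hu
    refine ⟨ε₀ / 2, by positivity, fun y => ?_⟩
    set sg : Fin n → ℝ := fun i => if 0 ≤ y i then 1 else -1 with hsgdef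
    have hsgy : ∀ i, sg i * y i = |y i| := by
      intro i; by_cases h : 0 ≤ y i
      · simp [hsgdef, h, abs_of_nonneg h]
      · simp only [hsgdef, h, if_false, abs_of_neg (lt_of_not_ge h)]; ring
    have hsgabs : ∀ i, |sg i| = 1 := by
      intro i; by_cases h : 0 ≤ y i <;> simp [hsgdef, h]
    set p : Fin n → ℝ := fun i => u i + ε₀ / 2 * sg i with hpdef
    have hpP : p ∈ P := by
      apply interior_subset
      apply hball
      rw [Metric.mem_ball, dist_pi_lt_iff hε₀]
      intro i
      rw [Real.dist_eq]
      have h1 : p i - u i = ε₀ / 2 * sg i := by simp [hpdef]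
      rw [h1, abs_mul, hsgabs, mul_one, abs_of_pos (by positivity)]
      linarith
    rw [hP, Set.mem_fintype_sum] at hpP
    obtain ⟨g, hg, hgsum⟩ := hpP
    choose w hw hgw using fun j => Set.mem_smul_set.mp (hg j)
    let L : (Fin n → ℝ) →ₗ[ℝ] ℝ :=
      { toFun := fun z => ∑ i, z i * y i
        map_add' := fun a b => by
          simp only [Pi.add_apply, add_mul]
          rw [Finset.sum_add_distrib]
        map_smul' := fun r a => by
          simp only [Pi.smul_apply, smul_eq_mul, RingHom.id_apply, Finset.mul_sum, mul_assoc] }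
    have hLj : ∀ j, ∃ ω ∈ A j, L (w j) ≤ ∑ i, (ω i : ℝ) * y i := by
      intro j
      obtain ⟨b, hb, hLb⟩ := (L.convexOn convex_univ).exists_ge_of_mem_convexHull
        (Set.subset_univ _) (hw j)
      obtain ⟨ω, hω, rfl⟩ := hb
      exact ⟨ω, hω, hLb⟩
    choose ω hωA hωL using hLj
    refine ⟨ω, hωA, ?_⟩
    have hLu : L u = ∑ i, u i * y i := rfl
    have hLp : L p = ∑ i, p i * y i := rfl
    have h1 : L p = (∑ i, u i * y i) + ε₀ / 2 * ∑ i, |y i| := by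
      rw [hLp, Finset.mul_sum, ← Finset.sum_add_distrib]
      refine Finset.sum_congr rfl fun i _ => ?_
      rw [← hsgy i]; simp only [hpdef]; ring
    have h2 : L p = ∑ j, v j * L (w j) := by
      rw [← hgsum, map_sum]
      refine Finset.sum_congr rfl fun j _ => ?_
      rw [← hgw j, _root_.map_smul, smul_eq_mul]
    have h3 : ∑ j, v j * L (w j) ≤ ∑ j, v j * ∑ i, (ω j i : ℝ) * y i :=
      Finset.sum_le_sum fun j _ => mul_le_mul_of_nonneg_left (hωL j) (hv j).le
    have h4 : ∑ j, v j * ∑ i, (ω j i : ℝ) * y i = ∑ i, (∑ j, v j * (ω j i : ℝ)) * y i := by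
      simp_rw [Finset.mul_sum, Finset.sum_mul]
      rw [Finset.sum_comm]
      exact Finset.sum_congr rfl fun i _ => Finset.sum_congr rfl fun j _ => by ring
    have h5 : ∑ i, (u i - ∑ j, v j * (ω j i : ℝ)) * y i
        = (∑ i, u i * y i) - ∑ i, (∑ j, v j * (ω j i : ℝ)) * y i := by
      rw [← Finset.sum_sub_distrib]
      exact Finset.sum_congr rfl fun i _ => by ring
    rw [h5]
    have h6 : -(ε₀ / 2) * ∑ i, |y i| = -(ε₀ / 2 * ∑ i, |y i|) := by ring
    linarith [h1, h2.le.trans h3, h4]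
  -- Notation for constants
  set mc : Fin e → ℝ := fun j => (A j).inf' (hA j) (c j) with hmcdef
  have hmc : ∀ j, 0 < mc j := fun j =>
    (Finset.lt_inf'_iff _).mpr fun b hb => hc j b hb
  set M : ℝ := ∏ j, mc j ^ (-v j) with hMdef
  have hM : 0 < M := Finset.prod_pos fun j _ => Real.rpow_pos_of_pos (hmc j) _
  set G : ℝ → ℝ := fun t => Real.exp (-ε * |Real.log t|) * t⁻¹ with hGdef
  -- Step 2: pointwise bound of the integrand by `M * ∏ i, G (x i)` on the positive orthant.
  have hpoint : ∀ x ∈ Set.univ.pi fun _ : Fin n => Set.Ioi (0 : ℝ),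
      (∏ j, q j x ^ (-v j)) * ∏ i, x i ^ (u i - 1) ≤ M * ∏ i, G (x i) := by
    intro x hx
    have hxi : ∀ i, 0 < x i := fun i => hx i (Set.mem_univ i)
    set y : Fin n → ℝ := fun i => Real.log (x i) with hydef
    obtain ⟨ω, hωA, hkey⟩ := key y
    set Sj : Fin e → ℝ := fun j => ∑ i, (ω j i : ℝ) * y i with hSjdef
    have hSjx : ∀ j, (∏ i, x i ^ ω j i) = Real.exp (Sj j) := by
      intro j
      rw [hSjdef, Real.exp_sum]
      refine Finset.prod_congr rfl fun i _ => ?_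
      rw [← Real.rpow_intCast (x i) (ω j i), Real.rpow_def_of_pos (hxi i), hydef, mul_comm]
    have hterm : ∀ j, c j (ω j) * Real.exp (Sj j) ≤ q j x := by
      intro j
      rw [hq, ← hSjx j]
      exact Finset.single_le_sum (f := fun ω' => c j ω' * ∏ i, x i ^ ω' i)
        (fun ω' hω' => le_of_lt (mul_pos (hc j ω' hω')
          (Finset.prod_pos fun i _ => zpow_pos (hxi i) _))) (hωA j)
    have hqpos : ∀ j, 0 < q j x := fun j =>
      lt_of_lt_of_le (mul_pos (hc j _ (hωA j)) (Real.exp_pos _)) (hterm j)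
    have hj : ∀ j, q j x ^ (-v j) ≤ mc j ^ (-v j) * Real.exp (-v j * Sj j) := by
      intro j
      have h2 : q j x ^ (-v j) ≤ (c j (ω j) * Real.exp (Sj j)) ^ (-v j) :=
        Real.rpow_le_rpow_of_nonpos (mul_pos (hc j _ (hωA j)) (Real.exp_pos _))
          (hterm j) (neg_nonpos.mpr (hv j).le)
      have h3 : (c j (ω j) * Real.exp (Sj j)) ^ (-v j)
          = c j (ω j) ^ (-v j) * Real.exp (-v j * Sj j) := by
        rw [Real.mul_rpow (hc j _ (hωA j)).le (Real.exp_pos _).le, ← Real.exp_mul,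
          mul_comm (Sj j) (-v j)]
      have h4 : c j (ω j) ^ (-v j) ≤ mc j ^ (-v j) :=
        Real.rpow_le_rpow_of_nonpos (hmc j) (Finset.inf'_le _ (hωA j))
          (neg_nonpos.mpr (hv j).le)
      calc q j x ^ (-v j) ≤ (c j (ω j) * Real.exp (Sj j)) ^ (-v j) := h2
        _ = c j (ω j) ^ (-v j) * Real.exp (-v j * Sj j) := h3
        _ ≤ mc j ^ (-v j) * Real.exp (-v j * Sj j) :=
          mul_le_mul_of_nonneg_right h4 (Real.exp_pos _).le
    have hprod1 : ∏ j, q j x ^ (-v j) ≤ M * Real.exp (∑ j, -v j * Sj j) := by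
      calc ∏ j, q j x ^ (-v j)
          ≤ ∏ j, (mc j ^ (-v j) * Real.exp (-v j * Sj j)) :=
            Finset.prod_le_prod (fun j _ => Real.rpow_nonneg (hqpos j).le _) fun j _ => hj j
        _ = M * Real.exp (∑ j, -v j * Sj j) := by
            rw [Finset.prod_mul_distrib, Real.exp_sum, hMdef]
    have hprod2 : (∏ i, x i ^ (u i - 1)) = Real.exp (∑ i, (u i - 1) * y i) := by
      rw [Real.exp_sum]
      refine Finset.prod_congr rfl fun i _ => ?_
      rw [Real.rpow_def_of_pos (hxi i), hydef, mul_comm]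
    have e1 : ∑ i, (∑ j, v j * (ω j i : ℝ)) * y i = ∑ j, v j * Sj j := by
      simp_rw [hSjdef, Finset.sum_mul, Finset.mul_sum]
      rw [Finset.sum_comm]
      exact Finset.sum_congr rfl fun j _ => Finset.sum_congr rfl fun i _ => by ring
    have e2 : ∑ i, (u i - ∑ j, v j * (ω j i : ℝ)) * y i
        = (∑ i, (u i - 1) * y i) + (∑ i, y i) - ∑ i, (∑ j, v j * (ω j i : ℝ)) * y i := by
      rw [← Finset.sum_add_distrib, ← Finset.sum_sub_distrib]
      exact Finset.sum_congr rfl fun i _ => by ring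
    have e3 : ∑ j, -v j * Sj j = -∑ j, v j * Sj j := by
      rw [← Finset.sum_neg_distrib]
      exact Finset.sum_congr rfl fun j _ => by ring
    have e4 : ∑ i, (-ε * |y i| - y i) = -ε * (∑ i, |y i|) - ∑ i, y i := by
      rw [Finset.sum_sub_distrib, Finset.mul_sum]
    have hexp : (∑ j, -v j * Sj j) + ∑ i, (u i - 1) * y i ≤ ∑ i, (-ε * |y i| - y i) := by
      rw [e3, e4]
      linarith [hkey, e1, e2]
    calc (∏ j, q j x ^ (-v j)) * ∏ i, x i ^ (u i - 1)
        ≤ (M * Real.exp (∑ j, -v j * Sj j)) * ∏ i, x i ^ (u i - 1) :=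
          mul_le_mul_of_nonneg_right hprod1
            (Finset.prod_nonneg fun i _ => Real.rpow_nonneg (hxi i).le _)
      _ = M * Real.exp ((∑ j, -v j * Sj j) + ∑ i, (u i - 1) * y i) := by
          rw [hprod2, mul_assoc, ← Real.exp_add]
      _ ≤ M * Real.exp (∑ i, (-ε * |y i| - y i)) :=
          mul_le_mul_of_nonneg_left (Real.exp_le_exp.mpr hexp) hM.le
      _ = M * ∏ i, G (x i) := by
          rw [Real.exp_sum]
          congr 1
          refine Finset.prod_congr rfl fun i _ => ?_
          rw [hGdef, sub_eq_add_neg, Real.exp_add, Real.exp_neg]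
          simp only [hydef]
          rw [Real.exp_log (hxi i)]
    -- end hpoint
  -- Step 3: integrability of `G` on `(0, ∞)`.
  have hGint : IntegrableOn G (Set.Ioi (0 : ℝ)) := by
    have h01 : IntegrableOn G (Set.Ioc (0 : ℝ) 1) := by
      have hr : IntegrableOn (fun t : ℝ => t ^ (ε - 1)) (Set.Ioc (0 : ℝ) 1) := by
        rw [integrableOn_Ioc_iff_integrableOn_Ioo]
        exact (intervalIntegral.integrableOn_Ioo_rpow_iff zero_lt_one).mpr (by linarith)
      refine hr.congr_fun (fun t ht => ?_) measurableSet_Ioc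
      obtain ⟨ht0, ht1⟩ := ht
      have hlog : Real.log t ≤ 0 := Real.log_nonpos ht0.le ht1
      rw [hGdef]
      beta_reduce
      rw [Real.rpow_sub ht0, Real.rpow_one, div_eq_mul_inv]
      congr 1
      rw [abs_of_nonpos hlog, show -ε * -Real.log t = Real.log t * ε by ring,
        Real.exp_mul, Real.exp_log ht0]
    have h1i : IntegrableOn G (Set.Ioi (1 : ℝ)) := by
      have hr : IntegrableOn (fun t : ℝ => t ^ (-ε - 1)) (Set.Ioi (1 : ℝ)) :=
        integrableOn_Ioi_rpow_of_lt (by linarith) zero_lt_one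
      refine hr.congr_fun (fun t ht => ?_) measurableSet_Ioi
      have ht0 : (0 : ℝ) < t := lt_trans zero_lt_one ht
      have hlog : 0 ≤ Real.log t := Real.log_nonneg (le_of_lt ht)
      rw [hGdef]
      beta_reduce
      rw [Real.rpow_sub ht0, Real.rpow_one, div_eq_mul_inv]
      congr 1
      rw [abs_of_nonneg hlog, show -ε * Real.log t = Real.log t * -ε by ring,
        Real.exp_mul, Real.exp_log ht0]
    have := h01.union h1i
    rwa [Set.Ioc_union_Ioi_eq_Ioi zero_le_one] at this
  have hGind : Integrable ((Set.Ioi (0 : ℝ)).indicator G) :=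
    hGint.integrable_indicator measurableSet_Ioi
  have hprodint : Integrable fun x : Fin n → ℝ => ∏ i, (Set.Ioi (0 : ℝ)).indicator G (x i) :=
    Integrable.fintype_prod (𝕜 := ℝ) fun _ => hGind
  have hGmeas : Measurable G := by
    rw [hGdef]
    exact (Real.measurable_exp.comp (Real.measurable_log.abs.const_mul (-ε))).mul measurable_inv
  -- Step 4: assembling everything.
  calc ∫⁻ x in Set.univ.pi fun _ : Fin n => Set.Ioi (0 : ℝ),
        ENNReal.ofReal ((∏ j, q j x ^ (-v j)) * ∏ i, x i ^ (u i - 1))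
      ≤ ∫⁻ x in Set.univ.pi fun _ : Fin n => Set.Ioi (0 : ℝ),
          ENNReal.ofReal (M * ∏ i, G (x i)) := by
        refine setLIntegral_mono ?_ fun x hx => ENNReal.ofReal_le_ofReal (hpoint x hx)
        exact ENNReal.measurable_ofReal.comp
          (measurable_const.mul (Finset.measurable_prod _ fun i _ =>
            hGmeas.comp (measurable_pi_apply i)))
    _ = ENNReal.ofReal M * ∫⁻ x in Set.univ.pi fun _ : Fin n => Set.Ioi (0 : ℝ),
          ENNReal.ofReal (∏ i, G (x i)) := by
        simp_rw [ENNReal.ofReal_mul hM.le]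
        rw [lintegral_const_mul' _ _ ENNReal.ofReal_ne_top]
    _ = ENNReal.ofReal M *
          ∫⁻ x : Fin n → ℝ, ENNReal.ofReal (∏ i, (Set.Ioi (0 : ℝ)).indicator G (x i)) := by
        congr 1
        rw [← lintegral_indicator hS]
        refine lintegral_congr fun x => ?_
        by_cases hx : x ∈ Set.univ.pi fun _ : Fin n => Set.Ioi (0 : ℝ)
        · rw [Set.indicator_of_mem hx]
          congr 1
          exact Finset.prod_congr rfl fun i _ =>
            (Set.indicator_of_mem (hx i (Set.mem_univ i)) G).symm
        · rw [Set.indicator_of_notMem hx]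
          obtain ⟨i, hi⟩ : ∃ i, x i ∉ Set.Ioi (0 : ℝ) := by
            by_contra h; push_neg at h; exact hx fun i _ => h i
          rw [Finset.prod_eq_zero (Finset.mem_univ i) (Set.indicator_of_notMem hi G),
            ENNReal.ofReal_zero]
    _ < ⊤ := ENNReal.mul_lt_top ENNReal.ofReal_lt_top hprodint.lintegral_lt_top
end

section
/- Let q₁,…,q_e be Laurent polynomials in n variables with positive coefficients, let v₁,…,v_e > 0, and set P := Σ_{j=1}^e v_j · New(q_j), assumed to be n-dimensional. If u lies in the interior of P, then lim_{ε→0⁺} εⁿ · ∫_{ℝⁿ_{>0}} ∏_{j=1}^e q_j(x)^{−ε v_j} · ∏_{i=1}^n x_i^{ε u_i−1} dx = n! · vol((P−u)^∘), where (P−u)^∘ := {φ ∈ ℝⁿ : ⟨φ, p−u⟩ ≥ −1 for all p ∈ P} is the polar dual polytope and vol is Lebesgue measure on ℝⁿ. -/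
open MeasureTheory Real Pointwise Set

lemma aux_exp_zpow (a : ℝ) (k : ℤ) : (Real.exp a) ^ k = Real.exp (k * a) := by
  rw [← Real.rpow_intCast, Real.rpow_def_of_pos (Real.exp_pos a), Real.log_exp, mul_comm]


lemma aux_cont_sup' {ι X : Type*} [TopologicalSpace X] {s : Finset ι} (hs : s.Nonempty)
    (f : ι → X → ℝ) (hf : ∀ i, Continuous (f i)) :
    Continuous fun z => s.sup' hs (fun i => f i z) := by
  induction hs using Finset.Nonempty.cons_induction with
  | singleton i => simpa using hf i
  | cons i s hi hs ih =>
      have : (fun z => (Finset.cons i s hi).sup' (Finset.cons_nonempty hi) (fun j => f j z))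
          = fun z => max (f i z) (s.sup' hs (fun j => f j z)) := by
        funext z; exact Finset.sup'_cons hs _
      rw [this]; exact (hf i).max ih

noncomputable def lin {n : ℕ} (ω : Fin n → ℤ) (z : Fin n → ℝ) : ℝ := ∑ i, (ω i : ℝ) * z i

lemma lin_islinear {n : ℕ} (z : Fin n → ℝ) :
    IsLinearMap ℝ (fun x : Fin n → ℝ => ∑ i, x i * z i) := by
  constructor
  · intro a b
    simp [add_mul, Finset.sum_add_distrib]
  · intro t a
    simp [Finset.mul_sum, mul_assoc]

noncomputable def mfn {n e : ℕ} (A : Fin e → Finset (Fin n → ℤ)) (hA : ∀ j, (A j).Nonempty)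
    (j : Fin e) (z : Fin n → ℝ) : ℝ :=
  (A j).sup' (hA j) (fun ω => lin ω z)

noncomputable def gfn {n e : ℕ} (A : Fin e → Finset (Fin n → ℤ)) (hA : ∀ j, (A j).Nonempty)
    (v : Fin e → ℝ) (u : Fin n → ℝ) (z : Fin n → ℝ) : ℝ :=
  (∑ j, v j * mfn A hA j z) - ∑ i, u i * z i

section Supp
variable {n e : ℕ} {A : Fin e → Finset (Fin n → ℤ)} (hA : ∀ j, (A j).Nonempty)
  {v : Fin e → ℝ} {u : Fin n → ℝ}

lemma lin_smul {n : ℕ} (ω : Fin n → ℤ) (t : ℝ) (z : Fin n → ℝ) :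
    lin ω (t • z) = t * lin ω z := by
  unfold lin
  rw [Finset.mul_sum]
  apply Finset.sum_congr rfl
  intro i _
  simp
  ring

lemma mfn_smul (j : Fin e) {t : ℝ} (ht : 0 ≤ t) (z : Fin n → ℝ) :
    mfn A hA j (t • z) = t * mfn A hA j z := by
  unfold mfn
  simp_rw [lin_smul]
  apply le_antisymm
  · apply Finset.sup'_le
    intro ω hω
    exact mul_le_mul_of_nonneg_left (Finset.le_sup' (fun ω => lin ω z) hω) ht
  · obtain ⟨ω₀, hω₀, hmax⟩ := Finset.exists_mem_eq_sup' (hA j) (fun ω => lin ω z)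
    rw [hmax]
    exact Finset.le_sup' (f := fun ω => t * lin ω z) hω₀

lemma gfn_smul {t : ℝ} (ht : 0 ≤ t) (z : Fin n → ℝ) :
    gfn A hA v u (t • z) = t * gfn A hA v u z := by
  unfold gfn
  rw [mul_sub, Finset.mul_sum, Finset.mul_sum]
  congr 1
  · apply Finset.sum_congr rfl
    intro j _
    rw [mfn_smul hA j ht z]
    ring
  · apply Finset.sum_congr rfl
    intro i _
    simp
    ring

lemma mfn_cont (j : Fin e) : Continuous (mfn A hA j) := by
  apply aux_cont_sup'
  intro ω
  unfold lin
  exact continuous_finset_sum _ fun i _ => (continuous_const.mul (continuous_apply i))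

lemma gfn_cont : Continuous (gfn A hA v u) := by
  unfold gfn
  exact ((continuous_finset_sum _ fun j _ => (continuous_const.mul (mfn_cont hA j))).sub
    (continuous_finset_sum _ fun i _ => (continuous_const.mul (continuous_apply i))))

lemma gfn_subadd (hv : ∀ j, 0 < v j) {a b : ℝ} (ha : 0 ≤ a) (hb : 0 ≤ b)
    (x y : Fin n → ℝ) :
    gfn A hA v u (a • x + b • y) ≤ a * gfn A hA v u x + b * gfn A hA v u y := by
  have hm : ∀ j, mfn A hA j (a • x + b • y) ≤ a * mfn A hA j x + b * mfn A hA j y := by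
    intro j
    apply Finset.sup'_le
    intro ω hω
    have hl : lin ω (a • x + b • y) = a * lin ω x + b * lin ω y := by
      unfold lin
      rw [Finset.mul_sum, Finset.mul_sum, ← Finset.sum_add_distrib]
      apply Finset.sum_congr rfl
      intro i _
      simp
      ring
    rw [hl]
    exact add_le_add (mul_le_mul_of_nonneg_left (Finset.le_sup' (fun ω => lin ω x) hω) ha)
      (mul_le_mul_of_nonneg_left (Finset.le_sup' (fun ω => lin ω y) hω) hb)
  unfold gfn
  have hsum : ∑ j, v j * mfn A hA j (a • x + b • y)
      ≤ a * (∑ j, v j * mfn A hA j x) + b * (∑ j, v j * mfn A hA j y) := by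
    calc ∑ j, v j * mfn A hA j (a • x + b • y)
        ≤ ∑ j, (a * (v j * mfn A hA j x) + b * (v j * mfn A hA j y)) := by
          apply Finset.sum_le_sum
          intro j _
          have h2 := mul_le_mul_of_nonneg_left (hm j) (hv j).le
          nlinarith [h2]
      _ = a * (∑ j, v j * mfn A hA j x) + b * (∑ j, v j * mfn A hA j y) := by
          rw [Finset.sum_add_distrib, ← Finset.mul_sum, ← Finset.mul_sum]
  have hlin : ∑ i, u i * (a • x + b • y) i = a * (∑ i, u i * x i) + b * (∑ i, u i * y i) := by
    rw [Finset.mul_sum, Finset.mul_sum, ← Finset.sum_add_distrib]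
    apply Finset.sum_congr rfl
    intro i _
    simp
    ring
  rw [hlin]
  linarith

lemma gfn_convex (hv : ∀ j, 0 < v j) : Convex ℝ {z | gfn A hA v u z ≤ 1} := by
  intro x hx y hy a b ha hb hab
  have h := gfn_subadd (u := u) hA hv ha hb x y
  have hx' : gfn A hA v u x ≤ 1 := hx
  have hy' : gfn A hA v u y ≤ 1 := hy
  have hab2 : a * gfn A hA v u x + b * gfn A hA v u y ≤ a + b := by
    have h1 := mul_le_mul_of_nonneg_left hx' ha
    have h2 := mul_le_mul_of_nonneg_left hy' hb
    linarith
  show gfn A hA v u (a • x + b • y) ≤ 1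
  calc gfn A hA v u (a • x + b • y) ≤ a * gfn A hA v u x + b * gfn A hA v u y := h
    _ ≤ a + b := hab2
    _ = 1 := hab

end Supp

lemma aux_norm_sq_le (n : ℕ) (z : Fin n → ℝ) (hz : z ≠ 0) : ‖z‖ ^ 2 ≤ ∑ i, z i * z i := by
  have hex : ∃ i, z i ≠ 0 := by
    by_contra h
    push_neg at h
    exact hz (funext h)
  obtain ⟨i₁, hi₁⟩ := hex
  obtain ⟨i₀, _, hi₀⟩ := Finset.exists_mem_eq_sup (Finset.univ : Finset (Fin n))
    ⟨i₁, Finset.mem_univ i₁⟩ (fun i => ‖z i‖₊)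
  have hnorm : ‖z‖ = |z i₀| := by
    rw [Pi.norm_def, hi₀]
    simp [Real.norm_eq_abs]
  rw [hnorm]
  calc |z i₀| ^ 2 = z i₀ * z i₀ := by rw [sq_abs]; ring
    _ ≤ ∑ i, z i * z i := Finset.single_le_sum (fun i _ => mul_self_nonneg (z i))
        (Finset.mem_univ i₀)

section Supp2
variable {n e : ℕ} {A : Fin e → Finset (Fin n → ℤ)} (hA : ∀ j, (A j).Nonempty)
  {v : Fin e → ℝ} {u : Fin n → ℝ} {P : Set (Fin n → ℝ)}

lemma gfn_ge (hv : ∀ j, 0 < v j)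
    (hP : P = ∑ j, v j •
      convexHull ℝ ((fun ω : Fin n → ℤ => fun i => (ω i : ℝ)) '' ↑(A j)))
    (z : Fin n → ℝ) : ∀ p ∈ P, ∑ i, (p i - u i) * z i ≤ gfn A hA v u z := by
  intro p hp
  rw [hP] at hp
  obtain ⟨w, hw, hwsum⟩ := (Set.mem_finset_sum _ _ _).1 hp
  set Lm := IsLinearMap.mk' _ (lin_islinear (n := n) z) with hLm
  have hLp : ∑ i, p i * z i = ∑ j, Lm (w j) := by
    rw [← hwsum]
    exact map_sum Lm w Finset.univ
  have hLj : ∀ j, Lm (w j) ≤ v j * mfn A hA j z := by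
    intro j
    obtain ⟨pj, hpj, hpj2⟩ := Set.mem_smul_set.1 (hw (Finset.mem_univ j))
    have hsub : convexHull ℝ ((fun ω : Fin n → ℤ => fun i => (ω i : ℝ)) '' ↑(A j))
        ⊆ {x | Lm x ≤ mfn A hA j z} := by
      apply convexHull_min
      · rintro x ⟨ω, hω, rfl⟩
        show Lm _ ≤ _
        have : Lm (fun i => (ω i : ℝ)) = lin ω z := rfl
        rw [this]
        exact Finset.le_sup' (fun ω => lin ω z) (Finset.mem_coe.1 hω)
      · exact convex_halfSpace_le (Lm.isLinear) _
    have hple := hsub hpj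
    rw [← hpj2, Lm.map_smul]
    simp only [smul_eq_mul]
    exact mul_le_mul_of_nonneg_left hple (hv j).le
  have hsub2 : ∑ i, (p i - u i) * z i = (∑ i, p i * z i) - ∑ i, u i * z i := by
    rw [← Finset.sum_sub_distrib]
    apply Finset.sum_congr rfl
    intro i _
    ring
  rw [hsub2, hLp]
  unfold gfn
  have := Finset.sum_le_sum (fun j (_ : j ∈ Finset.univ) => hLj j)
  linarith

lemma gfn_exists (hv : ∀ j, 0 < v j)
    (hP : P = ∑ j, v j •
      convexHull ℝ ((fun ω : Fin n → ℤ => fun i => (ω i : ℝ)) '' ↑(A j)))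
    (z : Fin n → ℝ) : ∃ p ∈ P, ∑ i, (p i - u i) * z i = gfn A hA v u z := by
  have hch := fun j => Finset.exists_mem_eq_sup' (hA j) (fun ω => lin ω z)
  choose ω hmem hmax using hch
  refine ⟨∑ j, v j • (fun i => (ω j i : ℝ)), ?_, ?_⟩
  · rw [hP]
    apply (Set.mem_finset_sum _ _ _).2
    refine ⟨fun j => v j • (fun i => (ω j i : ℝ)), ?_, rfl⟩
    intro j _
    exact Set.smul_mem_smul_set (subset_convexHull ℝ _
      (Set.mem_image_of_mem _ (Finset.mem_coe.2 (hmem j))))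
  · set Lm := IsLinearMap.mk' _ (lin_islinear (n := n) z) with hLm
    have hsub2 : ∀ p : Fin n → ℝ, ∑ i, (p i - u i) * z i = Lm p - ∑ i, u i * z i := by
      intro p
      show _ = (∑ i, p i * z i) - _
      rw [← Finset.sum_sub_distrib]
      apply Finset.sum_congr rfl
      intro i _
      ring
    rw [hsub2]
    unfold gfn
    congr 1
    rw [map_sum]
    apply Finset.sum_congr rfl
    intro j _
    rw [Lm.map_smul]
    have : Lm (fun i => (ω j i : ℝ)) = lin (ω j) z := rfl
    rw [smul_eq_mul, this, ← hmax j]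
    rfl

lemma gfn_delta (hv : ∀ j, 0 < v j)
    (hP : P = ∑ j, v j •
      convexHull ℝ ((fun ω : Fin n → ℤ => fun i => (ω i : ℝ)) '' ↑(A j)))
    (hu : u ∈ interior P) :
    ∃ δ : ℝ, 0 < δ ∧ ∀ z, δ * ‖z‖ ≤ gfn A hA v u z := by
  rw [mem_interior_iff_mem_nhds] at hu
  obtain ⟨δ, hδ, hball⟩ := Metric.mem_nhds_iff.1 hu
  refine ⟨δ/2, by positivity, ?_⟩
  intro z
  by_cases hz : z = 0
  · simp [hz, gfn, mfn, lin]
  · set r := δ/2/‖z‖ with hr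
    have hnz : (0:ℝ) < ‖z‖ := norm_pos_iff.2 hz
    have hrpos : 0 < r := by positivity
    have hp : u + r • z ∈ P := by
      apply hball
      rw [Metric.mem_ball, dist_eq_norm]
      have : u + r • z - u = r • z := by ring_nf -- might need abel
      rw [this, norm_smul]
      simp only [Real.norm_eq_abs, abs_of_pos hrpos]
      rw [hr, div_mul_cancel₀ _ (ne_of_gt hnz)]
      linarith
    have h1 := gfn_ge (u := u) hA hv hP z _ hp
    have h2 : ∑ i, ((u + r • z) i - u i) * z i = r * ∑ i, z i * z i := by
      rw [Finset.mul_sum]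
      apply Finset.sum_congr rfl
      intro i _
      simp
      ring
    rw [h2] at h1
    have h3 : ‖z‖ ^ 2 ≤ ∑ i, z i * z i := aux_norm_sq_le n z hz
    have h4 : r * ‖z‖ ^ 2 ≤ r * ∑ i, z i * z i := mul_le_mul_of_nonneg_left h3 hrpos.le
    have h5 : r * ‖z‖ ^ 2 = δ/2 * ‖z‖ := by
      rw [hr]
      field_simp
    linarith

lemma logq_bound {c : Fin e → (Fin n → ℤ) → ℝ} (hc : ∀ j, ∀ ω ∈ A j, 0 < c j ω) (j : Fin e) :
    ∃ b : ℝ, ∀ y : Fin n → ℝ,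
      |Real.log (∑ ω ∈ A j, c j ω * Real.exp (lin ω y)) - mfn A hA j y| ≤ b := by
  set cmin := (A j).inf' (hA j) (c j) with hcmin
  set cmax := (A j).sup' (hA j) (c j) with hcmax
  set k := (A j).card with hk
  have hcminpos : 0 < cmin := by
    rw [hcmin, Finset.lt_inf'_iff]
    exact fun ω hω => hc j ω hω
  have hcmaxpos : 0 < cmax := by
    obtain ⟨ω₁, hω₁⟩ := hA j
    exact lt_of_lt_of_le (hc j ω₁ hω₁) (Finset.le_sup' _ hω₁)
  have hkpos : 0 < (k : ℝ) := by
    have := Finset.card_pos.2 (hA j)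
    exact_mod_cast this
  refine ⟨max |Real.log cmin| |Real.log ((k : ℝ) * cmax)|, ?_⟩
  intro y
  set Qy := ∑ ω ∈ A j, c j ω * Real.exp (lin ω y) with hQy
  have hterm : ∀ ω ∈ A j, 0 ≤ c j ω * Real.exp (lin ω y) :=
    fun ω hω => mul_nonneg (hc j ω hω).le (Real.exp_pos _).le
  obtain ⟨ω₀, hω₀, hm⟩ := Finset.exists_mem_eq_sup' (hA j) (fun ω => lin ω y)
  have hlow : cmin * Real.exp (mfn A hA j y) ≤ Qy := by
    have h1 : c j ω₀ * Real.exp (lin ω₀ y) ≤ Qy :=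
      Finset.single_le_sum hterm hω₀
    have h2 : cmin * Real.exp (mfn A hA j y) ≤ c j ω₀ * Real.exp (lin ω₀ y) := by
      unfold mfn
      rw [hm]
      exact mul_le_mul_of_nonneg_right (Finset.inf'_le _ hω₀) (Real.exp_pos _).le
    linarith
  have hhigh : Qy ≤ (k : ℝ) * cmax * Real.exp (mfn A hA j y) := by
    have h1 : Qy ≤ ∑ _ω ∈ A j, cmax * Real.exp (mfn A hA j y) := by
      apply Finset.sum_le_sum
      intro ω hω
      apply mul_le_mul (Finset.le_sup' _ hω)
        (Real.exp_le_exp.2 (Finset.le_sup' (fun ω => lin ω y) hω))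
        (Real.exp_pos _).le hcmaxpos.le
    rw [Finset.sum_const] at h1
    rw [mul_assoc]
    calc Qy ≤ _ := h1
      _ = (k:ℝ) * (cmax * Real.exp (mfn A hA j y)) := by
        rw [nsmul_eq_mul]
  have hQpos : 0 < Qy := lt_of_lt_of_le (by positivity) hlow
  have hloglow : Real.log cmin + mfn A hA j y ≤ Real.log Qy := by
    have := Real.log_le_log (by positivity) hlow
    rwa [Real.log_mul (ne_of_gt hcminpos) (ne_of_gt (Real.exp_pos _)), Real.log_exp] at this
  have hloghigh : Real.log Qy ≤ Real.log ((k:ℝ) * cmax) + mfn A hA j y := by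
    have := Real.log_le_log hQpos hhigh
    rwa [Real.log_mul (by positivity) (ne_of_gt (Real.exp_pos _)), Real.log_exp] at this
  rw [abs_le]
  constructor
  · have : -|Real.log cmin| ≤ Real.log cmin := neg_abs_le _
    have h6 := le_max_left |Real.log cmin| |Real.log ((k : ℝ) * cmax)|
    linarith
  · have : Real.log ((k:ℝ) * cmax) ≤ |Real.log ((k:ℝ) * cmax)| := le_abs_self _
    have h6 := le_max_right |Real.log cmin| |Real.log ((k : ℝ) * cmax)|
    linarith

end Supp2


lemma aux_layercake (n : ℕ) (g : (Fin n → ℝ) → ℝ) (hgc : Continuous g)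
    (hg0 : ∀ z, 0 ≤ g z)
    (hhom : ∀ t : ℝ, 0 < t → ∀ z, g (t • z) = t * g z)
    (hconv : Convex ℝ {z | g z ≤ 1}) :
    ∫⁻ z, ENNReal.ofReal (Real.exp (-(g z)))
      = ENNReal.ofReal (n.factorial) * volume {z | g z ≤ 1} := by
  set V := volume {z | g z ≤ 1} with hV
  -- volume of sublevel sets
  have hlt1 : volume {z | g z < 1} = V := by
    refine le_antisymm (measure_mono fun z hz => (le_of_lt hz : g z ≤ 1)) ?_
    have hsub : {z | g z ≤ 1} ⊆ {z | g z < 1} ∪ frontier {z | g z ≤ 1} := by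
      intro z hz
      have hz' : g z ≤ 1 := hz
      rcases lt_or_eq_of_le hz' with h | h
      · exact Or.inl h
      · refine Or.inr ⟨subset_closure hz, ?_⟩
        intro hzint
        have hnb : interior {z | g z ≤ 1} ∈ nhds z := (isOpen_interior.mem_nhds hzint)
        have htt : Filter.Tendsto (fun k : ℕ => (1 + 1/(k+1) : ℝ) • z) Filter.atTop (nhds z) := by
          have h1 : Filter.Tendsto (fun k : ℕ => (1 + 1/(k+1) : ℝ)) Filter.atTop (nhds 1) := by
            have := tendsto_one_div_add_atTop_nhds_zero_nat (𝕜 := ℝ)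
            have h2 := this.const_add (1:ℝ)
            simpa using h2
          have := h1.smul_const z
          simpa using this
        have := htt.eventually_mem hnb
        rcases this.exists with ⟨k, hk⟩
        have hk2 : ((1 + 1/(k+1) : ℝ) • z) ∈ {z | g z ≤ 1} := interior_subset hk
        have hk3 : g ((1 + 1/(k+1) : ℝ) • z) ≤ 1 := hk2
        have hpos : (0:ℝ) < 1 + 1/(k+1) := by positivity
        rw [hhom _ hpos, h] at hk3
        have hp2 : (0:ℝ) < 1/(k+1) := by positivity
        linarith
    calc volume {z | g z ≤ 1} ≤ volume ({z | g z < 1} ∪ frontier {z | g z ≤ 1}) :=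
          measure_mono hsub
      _ ≤ volume {z | g z < 1} + volume (frontier {z | g z ≤ 1}) := measure_union_le _ _
      _ = volume {z | g z < 1} := by rw [Convex.addHaar_frontier volume hconv, add_zero]
  have hvol : ∀ t : ℝ, 0 < t → volume {z | g z < t} = ENNReal.ofReal (t ^ n) * V := by
    intro t ht
    have hset : {z | g z < t} = t • {z | g z < 1} := by
      ext z
      rw [mem_smul_set_iff_inv_smul_mem₀ (ne_of_gt ht)]
      simp only [mem_setOf_eq]
      rw [hhom t⁻¹ (inv_pos.2 ht)]
      rw [inv_mul_lt_iff₀ ht, mul_one]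
    rw [hset, Measure.addHaar_smul_of_nonneg volume (le_of_lt ht), hlt1]
    congr 2
    simp
  -- pointwise layer-cake
  have h1 : ∀ z, ENNReal.ofReal (Real.exp (-(g z)))
      = ∫⁻ t in Ioi (0:ℝ), (if g z < t then ENNReal.ofReal (Real.exp (-t)) else 0) := by
    intro z
    have heq : (fun t => if g z < t then ENNReal.ofReal (Real.exp (-t)) else 0)
        = (Ioi (g z)).indicator (fun t => ENNReal.ofReal (Real.exp (-t))) := by
      funext t; simp [Set.indicator, mem_Ioi]
    rw [heq, lintegral_indicator measurableSet_Ioi, Measure.restrict_restrict measurableSet_Ioi]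
    have : Ioi (g z) ∩ Ioi (0:ℝ) = Ioi (g z) := by
      rw [Ioi_inter_Ioi, sup_eq_left.2 (hg0 z)]
    rw [this]
    have hInt : IntegrableOn (fun t => Real.exp (-t)) (Ioi (g z)) := by
      have := exp_neg_integrableOn_Ioi (g z) one_pos
      simpa using this
    rw [← ofReal_integral_eq_lintegral_ofReal hInt
      (Filter.Eventually.of_forall fun t => (Real.exp_pos _).le)]
    rw [integral_exp_neg_Ioi]
  -- swap
  have hswap : ∫⁻ z, ENNReal.ofReal (Real.exp (-(g z)))
      = ∫⁻ t in Ioi (0:ℝ), ∫⁻ z, (if g z < t then ENNReal.ofReal (Real.exp (-t)) else 0) := by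
    simp_rw [h1]
    apply lintegral_lintegral_swap
    apply Measurable.aemeasurable
    apply Measurable.ite
    · exact measurableSet_lt (hgc.measurable.comp measurable_fst) measurable_snd
    · exact (ENNReal.measurable_ofReal.comp (Real.continuous_exp.measurable.comp measurable_neg)).comp measurable_snd
    · exact measurable_const
  rw [hswap]
  -- inner integral
  have hinner : ∀ t ∈ Ioi (0:ℝ), ∫⁻ z, (if g z < t then ENNReal.ofReal (Real.exp (-t)) else 0)
      = ENNReal.ofReal (Real.exp (-t) * t ^ n) * V := by
    intro t ht
    have heq : (fun z => if g z < t then ENNReal.ofReal (Real.exp (-t)) else 0)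
        = {z | g z < t}.indicator (fun _ => ENNReal.ofReal (Real.exp (-t))) := by
      funext z; simp [Set.indicator]
    rw [heq, lintegral_indicator (isOpen_lt hgc continuous_const).measurableSet,
      setLIntegral_const, hvol t ht, ENNReal.ofReal_mul (Real.exp_pos _).le]
    ring
  rw [setLIntegral_congr_fun measurableSet_Ioi hinner]
  -- final Gamma computation
  have hmeas : Measurable fun t : ℝ => ENNReal.ofReal (Real.exp (-t) * t ^ n) := by
    apply ENNReal.measurable_ofReal.comp
    exact ((Real.continuous_exp.comp continuous_neg).mul (continuous_pow n)).measurable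
  rw [lintegral_mul_const _ hmeas]
  have hIG : IntegrableOn (fun t => Real.exp (-t) * t ^ n) (Ioi (0:ℝ)) := by
    have := Real.GammaIntegral_convergent (s := n + 1) (by positivity)
    have heq : (fun x : ℝ => Real.exp (-x) * x ^ ((n:ℝ) + 1 - 1)) = fun x => Real.exp (-x) * x ^ n := by
      funext x
      rw [add_sub_cancel_right, Real.rpow_natCast]
    rwa [heq] at this
  have : ∫⁻ t in Ioi (0:ℝ), ENNReal.ofReal (Real.exp (-t) * t ^ n)
      = ENNReal.ofReal (n.factorial) := by
    rw [← ofReal_integral_eq_lintegral_ofReal hIG]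
    · congr 1
      have hG := Real.Gamma_eq_integral (s := (n:ℝ) + 1) (by positivity)
      rw [Real.Gamma_nat_eq_factorial] at hG
      rw [hG]
      apply setIntegral_congr_fun measurableSet_Ioi
      intro x _
      simp only [add_sub_cancel_right, Real.rpow_natCast]
    · filter_upwards [ae_restrict_mem measurableSet_Ioi] with t ht
      have : (0:ℝ) < t := ht
      positivity
  rw [this]


lemma aux_cov (n : ℕ) (G : (Fin n → ℝ) → ℝ) :
    ∫ x in Set.univ.pi (fun _ : Fin n => Set.Ioi (0:ℝ)), G x
      = ∫ y : Fin n → ℝ, (∏ i, Real.exp (y i)) * G (fun i => Real.exp (y i)) := by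
  set f : (Fin n → ℝ) → (Fin n → ℝ) := fun y i => Real.exp (y i) with hf
  set f' : (Fin n → ℝ) → (Fin n → ℝ) →L[ℝ] (Fin n → ℝ) := fun y =>
    ContinuousLinearMap.pi (fun i => Real.exp (y i) • ContinuousLinearMap.proj i) with hf'
  have himg : f '' univ = univ.pi fun _ : Fin n => Ioi (0:ℝ) := by
    rw [Set.image_univ]
    ext x
    constructor
    · rintro ⟨y, rfl⟩ i _
      exact Real.exp_pos _
    · intro hx
      exact ⟨fun i => Real.log (x i), funext fun i => Real.exp_log (hx i (mem_univ i))⟩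
  have hder : ∀ y ∈ (univ : Set (Fin n → ℝ)), HasFDerivWithinAt f (f' y) univ y := by
    intro y _
    rw [hasFDerivWithinAt_univ, hasFDerivAt_pi']
    intro i
    have hp : HasFDerivAt (fun z : Fin n → ℝ => z i)
        (ContinuousLinearMap.proj i : (Fin n → ℝ) →L[ℝ] ℝ) y :=
      (ContinuousLinearMap.proj (R := ℝ) (φ := fun _ : Fin n => ℝ) i).hasFDerivAt (x := y)
    have h1 : HasFDerivAt (fun z : Fin n → ℝ => Real.exp (z i))
        (Real.exp (y i) • (ContinuousLinearMap.proj i : (Fin n → ℝ) →L[ℝ] ℝ)) y :=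
      by have := (Real.hasDerivAt_exp (y i)).comp_hasFDerivAt y hp; exact this
    refine h1.congr_fderiv ?_
    ext w
    simp [f']
  have hinj : InjOn f univ := fun a _ b _ h => funext fun i => Real.exp_injective (congrFun h i)
  have key := integral_image_eq_integral_abs_det_fderiv_smul volume MeasurableSet.univ hder hinj G
  rw [himg] at key
  rw [key, Measure.restrict_univ]
  congr 1
  funext y
  have hcoe : (f' y : (Fin n → ℝ) →ₗ[ℝ] (Fin n → ℝ))
      = Matrix.toLin' (Matrix.diagonal (fun i => Real.exp (y i))) := by
    apply LinearMap.ext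
    intro w
    funext i
    simp [f', Matrix.toLin'_apply, Matrix.mulVec_diagonal]
  have hdet : (f' y).det = ∏ i, Real.exp (y i) := by
    show LinearMap.det _ = _
    rw [hcoe, LinearMap.det_toLin', Matrix.det_diagonal]
  rw [hdet, abs_of_pos (Finset.prod_pos fun i _ => Real.exp_pos _)]
  rfl


/-- Leading term of the stringy integral: if `u` lies in the interior of the
(`n`-dimensional) weighted Minkowski sum `P = Σ_j v_j · New(q_j)`, then
`lim_{ε→0⁺} εⁿ ∫_{ℝⁿ_{>0}} ∏_j q_j(x)^{−εv_j} ∏ᵢ xᵢ^{εuᵢ−1} dx = n! · vol((P−u)^∘)`. -/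
theorem stmt_8 (n e : ℕ) (A : Fin e → Finset (Fin n → ℤ)) (hA : ∀ j, (A j).Nonempty)
    (c : Fin e → (Fin n → ℤ) → ℝ) (hc : ∀ j, ∀ ω ∈ A j, 0 < c j ω)
    (q : Fin e → (Fin n → ℝ) → ℝ)
    (hq : ∀ j x, q j x = ∑ ω ∈ A j, c j ω * ∏ i, x i ^ (ω i))
    (v : Fin e → ℝ) (hv : ∀ j, 0 < v j)
    (P : Set (Fin n → ℝ))
    (hP : P = ∑ j, v j •
        convexHull ℝ ((fun ω : Fin n → ℤ => fun i => (ω i : ℝ)) '' ↑(A j)))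
    (hPdim : (interior P).Nonempty)
    (u : Fin n → ℝ) (hu : u ∈ interior P)
    (Pdual : Set (Fin n → ℝ))
    (hPdual : Pdual = {φ | ∀ p ∈ P, -1 ≤ ∑ i, φ i * (p i - u i)}) :
    Filter.Tendsto
      (fun ε : ℝ => ε ^ n *
        ∫ x in Set.univ.pi fun _ : Fin n => Set.Ioi (0 : ℝ),
          (∏ j, q j x ^ (-(ε * v j))) * ∏ i, x i ^ (ε * u i - 1))
      (nhdsWithin 0 (Set.Ioi 0))
      (nhds ((n.factorial : ℝ) * (volume Pdual).toReal)) := by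
  classical
  set g : (Fin n → ℝ) → ℝ := gfn A hA v u with hgdef
  obtain ⟨δ, hδpos, hδle⟩ := gfn_delta hA hv hP hu
  have hg0 : ∀ z, 0 ≤ g z := fun z => le_trans (by positivity) (hδle z)
  have hgc : Continuous g := gfn_cont hA
  have hhom : ∀ t : ℝ, 0 < t → ∀ z, g (t • z) = t * g z := fun t ht z => gfn_smul hA ht.le z
  have hconv : Convex ℝ {z | g z ≤ 1} := gfn_convex hA hv
  set D := {z | g z ≤ 1} with hDdef
  -- Pdual = -D
  have hsumneg : ∀ (p φ : Fin n → ℝ),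
      ∑ i, (p i - u i) * (-φ) i = -∑ i, φ i * (p i - u i) := by
    intro p φ
    rw [← Finset.sum_neg_distrib]
    apply Finset.sum_congr rfl
    intro i _
    simp
    ring
  have hPD : Pdual = -D := by
    rw [hPdual]
    ext φ
    simp only [Set.mem_neg, Set.mem_setOf_eq, hDdef]
    constructor
    · intro h
      obtain ⟨p, hp, hval⟩ := gfn_exists (u := u) hA hv hP (-φ)
      rw [hsumneg p φ] at hval
      have hle := h p hp
      show g (-φ) ≤ 1
      rw [hgdef, ← hval]
      linarith
    · intro h p hp
      have h1 := gfn_ge (u := u) hA hv hP (-φ) p hp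
      rw [hsumneg p φ] at h1
      have h2 : g (-φ) ≤ 1 := h
      rw [hgdef] at h2
      linarith
  have hvolPD : volume Pdual = volume D := by
    rw [hPD]
    exact Measure.measure_neg volume D
  -- finiteness of volume D
  have hDsub : D ⊆ Metric.closedBall 0 (1/δ) := by
    intro z hz
    have h1 := hδle z
    have h2 : g z ≤ 1 := hz
    rw [Metric.mem_closedBall, dist_zero_right]
    rw [le_div_iff₀ hδpos]
    nlinarith
  have hVfin : volume D ≠ ⊤ :=
    ne_top_of_le_ne_top measure_closedBall_lt_top.ne (measure_mono hDsub)
  -- integrability and value of J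
  have hlint : ∫⁻ z, ENNReal.ofReal (Real.exp (-(g z)))
      = ENNReal.ofReal (n.factorial) * volume D :=
    aux_layercake n g hgc hg0 hhom hconv
  have hgm : AEStronglyMeasurable (fun z : Fin n → ℝ => Real.exp (-(g z))) volume :=
    (Real.continuous_exp.comp hgc.neg).aestronglyMeasurable
  have hIg : Integrable (fun z : Fin n → ℝ => Real.exp (-(g z))) := by
    refine ⟨hgm, ?_⟩
    rw [hasFiniteIntegral_iff_ofReal (Filter.Eventually.of_forall fun z => (Real.exp_pos _).le)]
    rw [hlint]
    exact ENNReal.mul_lt_top ENNReal.ofReal_lt_top hVfin.lt_top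
  set J := ∫ z, Real.exp (-(g z)) with hJdef
  have hJ : J = (n.factorial : ℝ) * (volume Pdual).toReal := by
    rw [hJdef, integral_eq_lintegral_of_nonneg_ae
      (Filter.Eventually.of_forall fun z => (Real.exp_pos _).le) hgm, hlint, hvolPD,
      ENNReal.toReal_mul, ENNReal.toReal_ofReal (by positivity)]
  -- the constant C
  choose b hb using fun j => logq_bound (hA := hA) hc j
  set C := ∑ j, v j * b j with hCdef
  have hC0 : 0 ≤ C :=
    Finset.sum_nonneg fun j _ => mul_nonneg (hv j).le (le_trans (abs_nonneg _) (hb j 0))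
  -- the function F
  set F : (Fin n → ℝ) → ℝ := fun y =>
    (∑ j, v j * Real.log (∑ ω ∈ A j, c j ω * Real.exp (lin ω y))) - ∑ i, u i * y i with hFdef
  have hQpos : ∀ j (y : Fin n → ℝ), (0:ℝ) < ∑ ω ∈ A j, c j ω * Real.exp (lin ω y) := by
    intro j y
    exact Finset.sum_pos (fun ω hω => mul_pos (hc j ω hω) (Real.exp_pos _)) (hA j)
  have hFg : ∀ y, |F y - g y| ≤ C := by
    intro y
    have hsplit : F y - g y
        = ∑ j, v j * (Real.log (∑ ω ∈ A j, c j ω * Real.exp (lin ω y)) - mfn A hA j y) := by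
      have hFy : F y = (∑ j, v j * Real.log (∑ ω ∈ A j, c j ω * Real.exp (lin ω y)))
          - ∑ i, u i * y i := rfl
      have hgy : g y = (∑ j, v j * mfn A hA j y) - ∑ i, u i * y i := rfl
      have hrhs : ∑ j, v j * (Real.log (∑ ω ∈ A j, c j ω * Real.exp (lin ω y)) - mfn A hA j y)
          = (∑ j, v j * Real.log (∑ ω ∈ A j, c j ω * Real.exp (lin ω y)))
            - ∑ j, v j * mfn A hA j y := by
        rw [← Finset.sum_sub_distrib]
        apply Finset.sum_congr rfl
        intro j _
        ring
      rw [hFy, hgy, hrhs]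
      ring
    rw [hsplit, hCdef]
    calc |∑ j, v j * (Real.log (∑ ω ∈ A j, c j ω * Real.exp (lin ω y)) - mfn A hA j y)|
        ≤ ∑ j, |v j * (Real.log (∑ ω ∈ A j, c j ω * Real.exp (lin ω y)) - mfn A hA j y)| :=
          Finset.abs_sum_le_sum_abs _ _
      _ ≤ ∑ j, v j * b j := by
          apply Finset.sum_le_sum
          intro j _
          rw [abs_mul, abs_of_pos (hv j)]
          exact mul_le_mul_of_nonneg_left (hb j y) (hv j).le
  have hlincont : ∀ ω : Fin n → ℤ, Continuous (fun y : Fin n → ℝ => lin ω y) := by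
    intro ω
    unfold lin
    exact continuous_finset_sum _ fun i _ => continuous_const.mul (continuous_apply i)
  have hFcont : Continuous F := by
    rw [hFdef]
    apply Continuous.sub
    · apply continuous_finset_sum
      intro j _
      apply continuous_const.mul
      apply Continuous.log
      · exact continuous_finset_sum _ fun ω _ =>
          continuous_const.mul (Real.continuous_exp.comp (hlincont ω))
      · exact fun y => ne_of_gt (hQpos j y)
    · exact continuous_finset_sum _ fun i _ => continuous_const.mul (continuous_apply i)
  -- main identity
  have hqy : ∀ j (y : Fin n → ℝ),
      q j (fun i => Real.exp (y i)) = ∑ ω ∈ A j, c j ω * Real.exp (lin ω y) := by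
    intro j y
    rw [hq]
    apply Finset.sum_congr rfl
    intro ω hω
    congr 1
    have : ∀ i, Real.exp (y i) ^ (ω i) = Real.exp ((ω i : ℝ) * y i) :=
      fun i => aux_exp_zpow (y i) (ω i)
    simp_rw [this]
    rw [← Real.exp_sum]
    rfl
  have hkey : ∀ ε : ℝ, 0 < ε →
      (ε ^ n * ∫ x in Set.univ.pi fun _ : Fin n => Set.Ioi (0 : ℝ),
          (∏ j, q j x ^ (-(ε * v j))) * ∏ i, x i ^ (ε * u i - 1))
        = ∫ z, Real.exp (-(ε * F (ε⁻¹ • z))) := by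
    intro ε hε
    have hint : ∀ y : Fin n → ℝ,
        (∏ i, Real.exp (y i)) * ((∏ j, q j (fun i => Real.exp (y i)) ^ (-(ε * v j)))
          * ∏ i, (Real.exp (y i)) ^ (ε * u i - 1)) = Real.exp (-(ε * F y)) := by
      intro y
      have h1 : ∏ j, q j (fun i => Real.exp (y i)) ^ (-(ε * v j))
          = Real.exp (∑ j, Real.log (∑ ω ∈ A j, c j ω * Real.exp (lin ω y)) * (-(ε * v j))) := by
        rw [Real.exp_sum]
        apply Finset.prod_congr rfl
        intro j _
        rw [hqy j y, Real.rpow_def_of_pos (hQpos j y)]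
      have h2 : ∏ i, (Real.exp (y i) : ℝ) ^ (ε * u i - 1)
          = Real.exp (∑ i, y i * (ε * u i - 1)) := by
        rw [Real.exp_sum]
        apply Finset.prod_congr rfl
        intro i _
        rw [Real.rpow_def_of_pos (Real.exp_pos _), Real.log_exp]
      have h3 : ∏ i, Real.exp (y i) = Real.exp (∑ i, y i) := (Real.exp_sum _ _).symm
      rw [h1, h2, h3, ← Real.exp_add, ← Real.exp_add]
      congr 1
      have e1 : ∑ j, Real.log (∑ ω ∈ A j, c j ω * Real.exp (lin ω y)) * (-(ε * v j))
          = -(ε * ∑ j, v j * Real.log (∑ ω ∈ A j, c j ω * Real.exp (lin ω y))) := by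
        rw [Finset.mul_sum, ← Finset.sum_neg_distrib]
        apply Finset.sum_congr rfl
        intro j _
        ring
      have e2 : ∑ i, y i * (ε * u i - 1) = ε * (∑ i, u i * y i) - ∑ i, y i := by
        rw [Finset.mul_sum, ← Finset.sum_sub_distrib]
        apply Finset.sum_congr rfl
        intro i _
        ring
      rw [e1, e2, hFdef]
      ring
    have hcov := aux_cov n
      (fun x => (∏ j, q j x ^ (-(ε * v j))) * ∏ i, x i ^ (ε * u i - 1))
    rw [hcov]
    have : (fun y : Fin n → ℝ => (∏ i, Real.exp (y i)) *
        ((∏ j, q j (fun i => Real.exp (y i)) ^ (-(ε * v j)))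
          * ∏ i, (Real.exp (y i) : ℝ) ^ (ε * u i - 1)))
        = fun y => Real.exp (-(ε * F y)) := funext hint
    rw [this]
    have hscale := Measure.integral_comp_inv_smul_of_nonneg volume
      (fun y => Real.exp (-(ε * F y))) hε.le
    rw [hscale]
    have hfr : Module.finrank ℝ (Fin n → ℝ) = n := by simp
    rw [hfr, smul_eq_mul]
  -- squeeze bounds
  have hbound : ∀ ε : ℝ, 0 < ε → ∀ z : Fin n → ℝ,
      Real.exp (-(ε*C)) * Real.exp (-(g z)) ≤ Real.exp (-(ε * F (ε⁻¹ • z)))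
      ∧ Real.exp (-(ε * F (ε⁻¹ • z))) ≤ Real.exp (ε*C) * Real.exp (-(g z)) := by
    intro ε hε z
    have h1 := hFg (ε⁻¹ • z)
    have h2 : g (ε⁻¹ • z) = ε⁻¹ * g z := hhom ε⁻¹ (inv_pos.2 hε) z
    rw [abs_le, h2] at h1
    have hεinv : ε * ε⁻¹ = 1 := mul_inv_cancel₀ (ne_of_gt hε)
    have h3 : ε * (F (ε⁻¹ • z) - ε⁻¹ * g z) = ε * F (ε⁻¹ • z) - g z := by
      rw [mul_sub, ← mul_assoc, hεinv, one_mul]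
    constructor
    · rw [← Real.exp_add]
      apply Real.exp_le_exp.2
      have h4 := mul_le_mul_of_nonneg_left h1.2 hε.le
      rw [h3] at h4
      linarith
    · rw [← Real.exp_add]
      apply Real.exp_le_exp.2
      have h4 := mul_le_mul_of_nonneg_left h1.1 hε.le
      rw [h3] at h4
      linarith
  have hmid : ∀ ε : ℝ, 0 < ε → Integrable (fun z : Fin n → ℝ => Real.exp (-(ε * F (ε⁻¹ • z)))) := by
    intro ε hε
    apply Integrable.mono' (hIg.const_mul (Real.exp (ε*C)))
    · exact (Real.continuous_exp.comp
        ((continuous_const.mul (hFcont.comp (continuous_const_smul ε⁻¹))).neg)).aestronglyMeasurable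
    · filter_upwards with z
      rw [Real.norm_eq_abs, abs_of_pos (Real.exp_pos _)]
      exact (hbound ε hε z).2
  -- conclusion by squeezing
  rw [← hJ]
  apply tendsto_of_tendsto_of_tendsto_of_le_of_le'
    (g := fun ε : ℝ => Real.exp (-(ε*C)) * J) (h := fun ε : ℝ => Real.exp (ε*C) * J)
  · have hcont : Continuous fun ε : ℝ => Real.exp (-(ε*C)) * J := by
      apply Continuous.mul _ continuous_const
      exact Real.continuous_exp.comp (continuous_id.mul continuous_const).neg
    have h5 := (hcont.tendsto 0).mono_left (nhdsWithin_le_nhds (s := Set.Ioi (0:ℝ)))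
    simpa using h5
  · have hcont : Continuous fun ε : ℝ => Real.exp (ε*C) * J := by
      apply Continuous.mul _ continuous_const
      exact Real.continuous_exp.comp (continuous_id.mul continuous_const)
    have h5 := (hcont.tendsto 0).mono_left (nhdsWithin_le_nhds (s := Set.Ioi (0:ℝ)))
    simpa using h5
  · filter_upwards [self_mem_nhdsWithin] with ε hε
    have hε : (0:ℝ) < ε := hε
    rw [hkey ε hε]
    calc Real.exp (-(ε*C)) * J = ∫ z, Real.exp (-(ε*C)) * Real.exp (-(g z)) := by
          rw [integral_const_mul]
      _ ≤ ∫ z, Real.exp (-(ε * F (ε⁻¹ • z))) :=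
          integral_mono (hIg.const_mul _) (hmid ε hε) (fun z => (hbound ε hε z).1)
  · filter_upwards [self_mem_nhdsWithin] with ε hε
    have hε : (0:ℝ) < ε := hε
    rw [hkey ε hε]
    calc ∫ z, Real.exp (-(ε * F (ε⁻¹ • z)))
        ≤ ∫ z, Real.exp (ε*C) * Real.exp (-(g z)) :=
          integral_mono (hmid ε hε) (hIg.const_mul _) (fun z => (hbound ε hε z).2)
      _ = Real.exp (ε*C) * J := by rw [integral_const_mul]
end

section
/- Let A₁,…,A_e ⊂ ℤⁿ be finite nonempty sets, let v₁,…,v_e > 0, and set P := Σ_{j=1}^e v_j · conv(A_j), assumed n-dimensional. Let := ⋃_{j=1}^e {(e_j, ω) : ω ∈ A_j} ⊂ ℝ^{e+n} be the Cayley configuration and Cone(Â)* := {φ ∈ ℝ^{e+n} : ⟨φ, a⟩ ≥ 0 for all a ∈ Â} its dual cone. If u lies in the interior of P, then (v₁⋯v_e) · ∫_{Cone(Â)*} exp(−⟨φ, (v,u)⟩) dφ = n! · vol((P−u)^∘), where the left-hand integral is the Lebesgue integral over the dual cone in ℝ^{e+n}, (P−u)^∘ := {ψ ∈ ℝⁿ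 : ⟨ψ, p−u⟩ ≥ −1 for all p ∈ P}, and vol is Lebesgue measure on ℝⁿ. -/
open MeasureTheory Real Pointwise

open Set Filter

lemma aux_int_exp {c : ℝ} (hc : 0 < c) (a : ℝ) :
    ∫ t in Set.Ioi a, Real.exp (-(c * t)) = Real.exp (-(c * a)) / c := by
  have hderiv : ∀ x ∈ Ici a, HasDerivAt (fun x => -(Real.exp (-(c * x)) / c))
      (Real.exp (-(c * x))) x := by
    intro x _
    have h1 : HasDerivAt (fun x : ℝ => -(c * x)) (-c) x := by
      simpa [Pi.neg_def] using ((hasDerivAt_id x).const_mul c).neg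
    have h2 : HasDerivAt (fun x : ℝ => Real.exp (-(c * x))) (Real.exp (-(c * x)) * (-c)) x :=
      (Real.hasDerivAt_exp _).comp x h1
    have h3 : HasDerivAt (fun x => -(Real.exp (-(c * x)) / c)) (-(Real.exp (-(c * x)) * -c / c)) x := by
      simpa [Pi.neg_def] using (h2.div_const c).neg
    convert h3 using 1
    field_simp
  have hint : IntegrableOn (fun x => Real.exp (-(c * x))) (Ioi a) := by
    simpa [neg_mul] using exp_neg_integrableOn_Ioi a hc
  have htend : Tendsto (fun x => -(Real.exp (-(c * x)) / c)) atTop (nhds 0) := by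
    have h0 : Tendsto (fun x : ℝ => c * x) atTop atTop :=
      Tendsto.const_mul_atTop hc tendsto_id
    have h1 : Tendsto (fun x : ℝ => Real.exp (-(c * x))) atTop (nhds 0) :=
      Real.tendsto_exp_neg_atTop_nhds_zero.comp h0
    simpa using (h1.div_const c).neg
  have := integral_Ioi_of_hasDerivAt_of_tendsto' hderiv hint htend
  rw [this]
  ring

lemma aux_lint_exp {c : ℝ} (hc : 0 < c) (a : ℝ) :
    ∫⁻ t in Set.Ici a, ENNReal.ofReal (Real.exp (-(c * t))) =
      ENNReal.ofReal (Real.exp (-(c * a)) / c) := by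
  rw [← Measure.restrict_congr_set Ioi_ae_eq_Ici]
  rw [← ofReal_integral_eq_lintegral_ofReal]
  · rw [aux_int_exp hc a]
  · exact (by simpa [neg_mul] using exp_neg_integrableOn_Ioi a hc :
      IntegrableOn (fun t => Real.exp (-(c * t))) (Ioi a))
  · exact Filter.Eventually.of_forall fun x => (Real.exp_pos _).le

lemma aux_lintegral_pi {e : ℕ} (h : Fin e → ℝ → ENNReal) (hm : ∀ j, Measurable (h j)) :
    ∫⁻ x : Fin e → ℝ, ∏ j, h j (x j) = ∏ j, ∫⁻ t, h j t := by
  induction e with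
  | zero => simp [MeasureTheory.volume_pi, lintegral_const]
  | succ m ih =>
      have A := (measurePreserving_piFinSuccAbove (fun _ : Fin (m+1) => (volume : Measure ℝ)) 0).symm
      rw [MeasureTheory.volume_pi, ← A.lintegral_comp_emb (MeasurableEquiv.measurableEmbedding _)]
      simp_rw [MeasurableEquiv.piFinSuccAbove_symm_apply, Fin.insertNthEquiv,
        Fin.prod_univ_succ, Fin.insertNth_zero, Equiv.coe_fn_mk]
      simp only [Fin.zero_succAbove, cast_eq, Fin.cons_zero, Fin.cons_succ]
      have key := lintegral_prod_mul (μ := (volume : Measure ℝ))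
        (ν := Measure.pi fun _ : Fin m => (volume : Measure ℝ))
        (f := h 0) (g := fun y => ∏ x : Fin m, h x.succ (y x))
        (hm 0).aemeasurable
        (Finset.measurable_prod Finset.univ
          (fun j _ => (hm j.succ).comp (measurable_pi_apply j))).aemeasurable
      refine key.trans ?_
      rw [← MeasureTheory.volume_pi, ih (fun j => h j.succ) (fun j => hm j.succ)]

/-- Dual volume of the Cayley cone computes the polar dual volume: if `u` lies in the
interior of `P = Σ_j v_j · conv(A_j)`, then
`(v₁⋯v_e) ∫_{Cone(Â)*} e^{−⟨φ,(v,u)⟩} dφ = n! · vol((P−u)^∘)`. -/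
theorem stmt_9 (n e : ℕ) (A : Fin e → Finset (Fin n → ℤ)) (hA : ∀ j, (A j).Nonempty)
    (v : Fin e → ℝ) (hv : ∀ j, 0 < v j) (u : Fin n → ℝ)
    (P : Set (Fin n → ℝ))
    (hP : P = ∑ j, v j •
        convexHull ℝ ((fun ω : Fin n → ℤ => fun i => (ω i : ℝ)) '' ↑(A j)))
    (hPdim : (interior P).Nonempty)
    (Kdual : Set ((Fin e → ℝ) × (Fin n → ℝ)))
    (hKdual : Kdual = {φ | ∀ j, ∀ ω ∈ A j, 0 ≤ φ.1 j + ∑ i, φ.2 i * (ω i : ℝ)})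
    (hu : u ∈ interior P)
    (Pdual : Set (Fin n → ℝ))
    (hPdual : Pdual = {ψ | ∀ p ∈ P, -1 ≤ ∑ i, ψ i * (p i - u i)}) :
    (∏ j, v j) *
        ∫ φ in Kdual, Real.exp (-(∑ j, φ.1 j * v j + ∑ i, φ.2 i * u i))
      = (n.factorial : ℝ) * (volume Pdual).toReal := by
  classical
  set m : Fin e → (Fin n → ℝ) → ℝ :=
    fun j ψ => (A j).sup' (hA j) (fun ω => -∑ i, ψ i * (ω i : ℝ)) with hm_def
  set G : (Fin n → ℝ) → ℝ :=
    fun ψ => (∑ j, v j * m j ψ) + ∑ i, ψ i * u i with hG_def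
  -- continuity
  have hmcont : ∀ j, Continuous (m j) := by
    intro j
    apply Continuous.finset_sup'_apply (hA j)
    intro ω _
    exact (continuous_finset_sum _ fun i _ => (continuous_apply i).mul continuous_const).neg
  have hGcont : Continuous G := by
    apply Continuous.add
    · exact continuous_finset_sum _ fun j _ => continuous_const.mul (hmcont j)
    · exact continuous_finset_sum _ fun i _ => (continuous_apply i).mul continuous_const
  -- basic sup' facts
  have hm_le : ∀ j (ψ : Fin n → ℝ) (ω : Fin n → ℤ), ω ∈ A j →
      -∑ i, ψ i * (ω i : ℝ) ≤ m j ψ := by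
    intro j ψ ω hω
    simp only [hm_def]
    exact Finset.le_sup' (f := fun ω : Fin n → ℤ => -∑ i, ψ i * (ω i : ℝ)) hω
  have hm_exists : ∀ j (ψ : Fin n → ℝ), ∃ ω ∈ A j, m j ψ = -∑ i, ψ i * (ω i : ℝ) := by
    intro j ψ
    simp only [hm_def]
    exact Finset.exists_mem_eq_sup' (hA j) _
  -- hull bound : for q in the convex hull, -⟨ψ, q⟩ ≤ m j ψ
  have hm_hull : ∀ j (ψ : Fin n → ℝ) (q : Fin n → ℝ),
      q ∈ convexHull ℝ ((fun ω : Fin n → ℤ => fun i => (ω i : ℝ)) '' ↑(A j)) →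
      -∑ i, ψ i * q i ≤ m j ψ := by
    intro j ψ q hq
    have hlin : IsLinearMap ℝ (fun w : Fin n → ℝ => ∑ i, ψ i * w i) := by
      constructor
      · intro a b
        simp [mul_add, Finset.sum_add_distrib]
      · intro c a
        simp only [Pi.smul_apply, smul_eq_mul, Finset.mul_sum]
        exact Finset.sum_congr rfl fun i _ => by ring
    have hconv : Convex ℝ {w : Fin n → ℝ | -(m j ψ) ≤ ∑ i, ψ i * w i} :=
      convex_halfSpace_ge hlin (-(m j ψ))
    have hsub : (fun ω : Fin n → ℤ => fun i => (ω i : ℝ)) '' ↑(A j) ⊆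
        {w : Fin n → ℝ | -(m j ψ) ≤ ∑ i, ψ i * w i} := by
      rintro w ⟨ω, hω, rfl⟩
      have := hm_le j ψ ω hω
      simp only [Set.mem_setOf_eq]
      linarith
    have := convexHull_min hsub hconv hq
    simp only [Set.mem_setOf_eq] at this
    linarith
  -- pairing computation
  have hpair : ∀ (ψ : Fin n → ℝ) (q : Fin e → Fin n → ℝ),
      ∑ i, ψ i * ((∑ j, v j • q j) i - u i) =
        (∑ j, v j * ∑ i, ψ i * q j i) - ∑ i, ψ i * u i := by
    intro ψ q
    simp only [Finset.sum_apply, Pi.smul_apply, smul_eq_mul, mul_sub, Finset.sum_sub_distrib]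
    congr 1
    calc ∑ i, ψ i * ∑ j, v j * q j i
        = ∑ i, ∑ j, v j * (ψ i * q j i) := by
          refine Finset.sum_congr rfl fun i _ => ?_
          rw [Finset.mul_sum]
          exact Finset.sum_congr rfl fun j _ => by ring
      _ = ∑ j, ∑ i, v j * (ψ i * q j i) := Finset.sum_comm
      _ = ∑ j, v j * ∑ i, ψ i * q j i := by
          refine Finset.sum_congr rfl fun j _ => ?_
          rw [Finset.mul_sum]
  -- key inequality
  have hK0 : ∀ (ψ : Fin n → ℝ), ∀ p ∈ P, -(G ψ) ≤ ∑ i, ψ i * (p i - u i) := by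
    intro ψ p hp
    rw [hP, Set.mem_finset_sum] at hp
    obtain ⟨g, hg, hsum⟩ := hp
    choose q hq hgq using fun j =>
      Set.mem_smul_set.1 (hg (Finset.mem_univ j))
    have hpq : p = ∑ j, v j • q j := by
      rw [← hsum]
      exact Finset.sum_congr rfl fun j _ => (hgq j).symm
    rw [hpq, hpair ψ q, hG_def]
    have hterm : ∀ j, -(v j * m j ψ) ≤ v j * ∑ i, ψ i * q j i := by
      intro j
      have h1 := hm_hull j ψ (q j) (hq j)
      nlinarith [hv j, mul_le_mul_of_nonneg_left h1 (hv j).le]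
    have := Finset.sum_le_sum (fun j (_ : j ∈ Finset.univ) => hterm j)
    rw [Finset.sum_neg_distrib] at this
    simp only
    linarith
  have hK0' : ∀ (ψ : Fin n → ℝ), ∃ p ∈ P, ∑ i, ψ i * (p i - u i) = -(G ψ) := by
    intro ψ
    choose ω hω hωval using fun j => hm_exists j ψ
    refine ⟨∑ j, v j • (fun i => (ω j i : ℝ)), ?_, ?_⟩
    · rw [hP, Set.mem_finset_sum]
      exact ⟨fun j => v j • (fun i => (ω j i : ℝ)),
        fun {j} _ => Set.smul_mem_smul_set
          (subset_convexHull ℝ _ (Set.mem_image_of_mem _ (hω j))), rfl⟩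
    · rw [hpair ψ (fun j => (fun i => (ω j i : ℝ))), hG_def]
      have : ∀ j, v j * ∑ i, ψ i * (ω j i : ℝ) = -(v j * m j ψ) := by
        intro j
        rw [hωval j]
        ring
      rw [Finset.sum_congr rfl fun j _ => this j, Finset.sum_neg_distrib]
      simp only
      ring
  have hP_u : u ∈ P := interior_subset hu
  have hGnonneg : ∀ ψ, 0 ≤ G ψ := by
    intro ψ
    have h := hK0 ψ u hP_u
    simp only [sub_self, mul_zero, Finset.sum_const_zero] at h
    linarith
  have hPd1 : Pdual = {ψ | G ψ ≤ 1} := by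
    rw [hPdual]
    ext ψ
    simp only [Set.mem_setOf_eq]
    constructor
    · intro h
      obtain ⟨p, hp, hval⟩ := hK0' ψ
      have h2 := h p hp
      rw [hval] at h2
      linarith
    · intro h p hp
      have := hK0 ψ p hp
      linarith
  have hmhom : ∀ j (t : ℝ), 0 ≤ t → ∀ ψ, m j (t • ψ) = t * m j ψ := by
    intro j t ht ψ
    have h1 : ∀ ω : Fin n → ℤ, -∑ i, (t • ψ) i * (ω i : ℝ) = t * -∑ i, ψ i * (ω i : ℝ) := by
      intro ω
      rw [mul_neg, Finset.mul_sum, neg_inj]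
      exact Finset.sum_congr rfl fun i _ => by simp [mul_assoc]
    simp only [hm_def]
    apply le_antisymm
    · apply Finset.sup'_le
      intro ω hω
      rw [h1 ω]
      exact mul_le_mul_of_nonneg_left
        (Finset.le_sup' (f := fun ω : Fin n → ℤ => -∑ i, ψ i * (ω i : ℝ)) hω) ht
    · obtain ⟨ω, hω, hval⟩ := Finset.exists_mem_eq_sup' (hA j)
        (fun ω : Fin n → ℤ => -∑ i, ψ i * (ω i : ℝ))
      rw [hval, ← h1 ω]
      exact Finset.le_sup' (f := fun ω : Fin n → ℤ => -∑ i, (t • ψ) i * (ω i : ℝ)) hω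
  have hGhom : ∀ (t : ℝ), 0 ≤ t → ∀ ψ, G (t • ψ) = t * G ψ := by
    intro t ht ψ
    simp only [hG_def]
    rw [mul_add, Finset.mul_sum, Finset.mul_sum]
    congr 1
    · exact Finset.sum_congr rfl fun j _ => by rw [hmhom j t ht ψ]; ring
    · exact Finset.sum_congr rfl fun i _ => by simp [mul_assoc]
  have hscale : ∀ s : ℝ, 0 < s → {ψ : Fin n → ℝ | G ψ ≤ s} = s • Pdual := by
    intro s hs
    ext ψ
    rw [Set.mem_smul_set_iff_inv_smul_mem₀ (ne_of_gt hs), hPd1]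
    simp only [Set.mem_setOf_eq]
    rw [hGhom s⁻¹ (by positivity) ψ]
    constructor
    · intro h
      have h2 := mul_le_mul_of_nonneg_left h (inv_nonneg.2 hs.le)
      rw [inv_mul_cancel₀ (ne_of_gt hs)] at h2
      exact h2
    · intro h
      have h2 := mul_le_mul_of_nonneg_left h hs.le
      rw [← mul_assoc, mul_inv_cancel₀ (ne_of_gt hs), one_mul, mul_one] at h2
      exact h2
  have hPdmeas : MeasurableSet Pdual := by
    rw [hPd1]
    exact measurableSet_le hGcont.measurable measurable_const
  have hVscale : ∀ s : ℝ, 0 < s →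
      volume {ψ : Fin n → ℝ | G ψ ≤ s} = ENNReal.ofReal (s ^ n) * volume Pdual := by
    intro s hs
    rw [hscale s hs, Measure.addHaar_smul_of_nonneg volume hs.le]
    congr 2
    simp [Module.finrank_pi]
  obtain ⟨ε, hε, hball⟩ := Metric.mem_nhds_iff.1 (mem_interior_iff_mem_nhds.1 hu)
  have hVfin : volume Pdual < ⊤ := by
    have hsub : Pdual ⊆ Set.pi Set.univ (fun _ : Fin n => Icc (-(2/ε)) (2/ε)) := by
      intro ψ hψ
      rw [hPdual] at hψ
      intro i _
      have key : ∀ (c : ℝ), |c| < ε → -1 ≤ ψ i * c := by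
        intro c hc
        have hpmem : Function.update u i (u i + c) ∈ P := by
          apply hball
          rw [Metric.mem_ball, dist_pi_lt_iff hε]
          intro b
          rcases eq_or_ne b i with rfl | hbi
          · simpa [Function.update_self, Real.dist_eq] using hc
          · simpa [Function.update_of_ne hbi] using hε
        have h3 := hψ _ hpmem
        rw [Finset.sum_eq_single i (fun b _ hbi => by
          simp [Function.update_of_ne hbi]) (by simp)] at h3
        simpa [Function.update_self] using h3
      have e2 : (0:ℝ) < ε/2 := by positivity
      have h1 := key (ε/2) (by rw [abs_of_pos e2]; linarith)
      have h2 := key (-(ε/2)) (by rw [abs_neg, abs_of_pos e2]; linarith)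
      rw [Set.mem_Icc]
      constructor
      · rw [← neg_div, div_le_iff₀ hε]
        nlinarith
      · rw [le_div_iff₀ hε]
        nlinarith
    calc volume Pdual
        ≤ volume (Set.pi Set.univ fun _ : Fin n => Icc (-(2/ε)) (2/ε)) := measure_mono hsub
      _ = ∏ _i : Fin n, volume (Icc (-(2/ε)) (2/ε)) := volume_pi_pi _
      _ < ⊤ := by
          rw [Real.volume_Icc]
          exact ENNReal.prod_lt_top fun i _ => ENNReal.ofReal_lt_top
  -- analytic part
  have hcontF : Continuous (fun φ : (Fin e → ℝ) × (Fin n → ℝ) =>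
      Real.exp (-(∑ j, φ.1 j * v j + ∑ i, φ.2 i * u i))) := by
    apply Real.continuous_exp.comp
    apply Continuous.neg
    apply Continuous.add
    · exact continuous_finset_sum _ fun j _ =>
        ((continuous_apply j).comp continuous_fst).mul continuous_const
    · exact continuous_finset_sum _ fun i _ =>
        ((continuous_apply i).comp continuous_snd).mul continuous_const
  have hKclosed : IsClosed Kdual := by
    rw [hKdual]
    have heq : {φ : (Fin e → ℝ) × (Fin n → ℝ) |
        ∀ j, ∀ ω ∈ A j, 0 ≤ φ.1 j + ∑ i, φ.2 i * (ω i : ℝ)}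
        = ⋂ j, ⋂ ω ∈ A j, {φ : (Fin e → ℝ) × (Fin n → ℝ) |
            0 ≤ φ.1 j + ∑ i, φ.2 i * (ω i : ℝ)} := by
      ext φ
      simp
    rw [heq]
    refine isClosed_iInter fun j => isClosed_iInter fun ω => isClosed_iInter fun _ => ?_
    apply isClosed_le continuous_const
    exact ((continuous_apply j).comp continuous_fst).add
      (continuous_finset_sum _ fun i _ =>
        ((continuous_apply i).comp continuous_snd).mul continuous_const)
  have hKmeas : MeasurableSet Kdual := hKclosed.measurableSet
  set F : ((Fin e → ℝ) × (Fin n → ℝ)) → ENNReal :=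
    fun φ => ENNReal.ofReal (Real.exp (-(∑ j, φ.1 j * v j + ∑ i, φ.2 i * u i))) with hF_def
  have hFmeas : Measurable F := hcontF.measurable.ennreal_ofReal
  -- Step A : Bochner integral to lintegral
  have hstepA : (∫ φ in Kdual, Real.exp (-(∑ j, φ.1 j * v j + ∑ i, φ.2 i * u i)))
      = (∫⁻ φ in Kdual, F φ).toReal := by
    rw [integral_eq_lintegral_of_nonneg_ae
      (Filter.Eventually.of_forall fun φ => (Real.exp_pos _).le)
      hcontF.aestronglyMeasurable.restrict]
  -- Main lintegral computation
  have main : (∫⁻ φ in Kdual, F φ)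
      = ENNReal.ofReal (∏ j, v j)⁻¹ *
          (ENNReal.ofReal (n.factorial : ℝ) * volume Pdual) := by
    have hIndmeas : Measurable (Kdual.indicator F) := hFmeas.indicator hKmeas
    -- Tonelli
    have hT : (∫⁻ φ in Kdual, F φ)
        = ∫⁻ y : Fin n → ℝ, ∫⁻ x : Fin e → ℝ, (Kdual.indicator F) (x, y) := by
      rw [← lintegral_indicator hKmeas]
      rw [MeasureTheory.Measure.volume_eq_prod, lintegral_prod_symm' _ hIndmeas]
    rw [hT]
    -- inner integral over x
    have hinner : ∀ y : Fin n → ℝ,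
        (∫⁻ x : Fin e → ℝ, (Kdual.indicator F) (x, y)) =
          ENNReal.ofReal ((∏ j, v j)⁻¹ * Real.exp (-(G y))) := by
      intro y
      have hmemK : ∀ x : Fin e → ℝ, ((x, y) ∈ Kdual ↔ ∀ j, m j y ≤ x j) := by
        intro x
        rw [hKdual]
        simp only [Set.mem_setOf_eq, hm_def]
        constructor
        · intro h j
          rw [Finset.sup'_le_iff]
          intro ω hω
          have := h j ω hω
          linarith
        · intro h j ω hω
          have h2 := (Finset.sup'_le_iff (hA j)
            (fun ω : Fin n → ℤ => -∑ i, y i * (ω i : ℝ))).1 (le_refl _) ω hω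
          have h3 := le_trans h2 (h j)
          linarith
      have hptwise : ∀ x : Fin e → ℝ, (Kdual.indicator F) (x, y) =
          ENNReal.ofReal (Real.exp (-(∑ i, y i * u i))) *
            ∏ j, (Set.Ici (m j y)).indicator
              (fun t => ENNReal.ofReal (Real.exp (-(v j * t)))) (x j) := by
        intro x
        by_cases hx : ∀ j, m j y ≤ x j
        · rw [Set.indicator_of_mem ((hmemK x).2 hx)]
          have hpr : ∀ j, (Set.Ici (m j y)).indicator
              (fun t => ENNReal.ofReal (Real.exp (-(v j * t)))) (x j)
              = ENNReal.ofReal (Real.exp (-(v j * x j))) := fun j =>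
            Set.indicator_of_mem (hx j) _
          rw [Finset.prod_congr rfl fun j _ => hpr j, ← ENNReal.ofReal_prod_of_nonneg
            (fun j _ => (Real.exp_pos _).le), ← ENNReal.ofReal_mul (Real.exp_pos _).le]
          simp only [hF_def]
          congr 1
          rw [← Real.exp_sum, ← Real.exp_add, Real.exp_eq_exp, Finset.sum_neg_distrib]
          rw [show ∑ j, x j * v j = ∑ j, v j * x j from
            Finset.sum_congr rfl fun j _ => mul_comm _ _]
          ring
        · push_neg at hx
          obtain ⟨j0, hj0⟩ := hx
          rw [Set.indicator_of_notMem
            (fun hc => absurd ((hmemK x).1 hc j0) (not_le.2 hj0))]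
          have hprod : (∏ j, (Set.Ici (m j y)).indicator
              (fun t => ENNReal.ofReal (Real.exp (-(v j * t)))) (x j)) = 0 :=
            Finset.prod_eq_zero (Finset.mem_univ j0)
              (Set.indicator_of_notMem (not_le.2 hj0) _)
          rw [hprod, mul_zero]
      rw [lintegral_congr hptwise]
      rw [lintegral_const_mul' _ _ ENNReal.ofReal_ne_top]
      have hmj : ∀ j : Fin e, Measurable (fun t : ℝ =>
          (Set.Ici (m j y)).indicator (fun t => ENNReal.ofReal (Real.exp (-(v j * t)))) t) := by
        intro j
        apply Measurable.indicator ?_ measurableSet_Ici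
        exact Measurable.ennreal_ofReal (by fun_prop)
      rw [aux_lintegral_pi (fun j t => (Set.Ici (m j y)).indicator
        (fun t => ENNReal.ofReal (Real.exp (-(v j * t)))) t) hmj]
      have hone : ∀ j, (∫⁻ t, (Set.Ici (m j y)).indicator
          (fun t => ENNReal.ofReal (Real.exp (-(v j * t)))) t)
          = ENNReal.ofReal (Real.exp (-(v j * m j y)) / v j) := by
        intro j
        rw [lintegral_indicator measurableSet_Ici, aux_lint_exp (hv j)]
      rw [Finset.prod_congr rfl fun j _ => hone j]
      rw [← ENNReal.ofReal_prod_of_nonneg (fun j _ => div_nonneg (Real.exp_pos _).le (hv j).le),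
        ← ENNReal.ofReal_mul (Real.exp_pos _).le]
      congr 1
      have h1 : ∏ j, Real.exp (-(v j * m j y)) / v j
          = Real.exp (∑ j, -(v j * m j y)) * (∏ j, v j)⁻¹ := by
        rw [Finset.prod_div_distrib, Real.exp_sum, div_eq_mul_inv]
      rw [h1, ← mul_assoc, ← Real.exp_add, mul_comm]
      simp only [hG_def]
      congr 1
      rw [Real.exp_eq_exp, Finset.sum_neg_distrib]
      ring
    rw [lintegral_congr hinner]
    have hsplit : ∀ y : Fin n → ℝ, ENNReal.ofReal ((∏ j, v j)⁻¹ * Real.exp (-(G y)))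
        = ENNReal.ofReal (∏ j, v j)⁻¹ * ENNReal.ofReal (Real.exp (-(G y))) := by
      intro y
      rw [ENNReal.ofReal_mul (inv_nonneg.2 (Finset.prod_nonneg fun j _ => (hv j).le))]
    rw [lintegral_congr hsplit, lintegral_const_mul' _ _ ENNReal.ofReal_ne_top]
    congr 1
    -- layer cake
    set W : Set ((Fin n → ℝ) × ℝ) := {z | G z.1 ≤ z.2} with hW_def
    have hWmeas : MeasurableSet W :=
      (isClosed_le (hGcont.comp continuous_fst) continuous_snd).measurableSet
    have hWind : Measurable (W.indicator
        (fun z : (Fin n → ℝ) × ℝ => ENNReal.ofReal (Real.exp (-z.2)))) :=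
      ((Real.continuous_exp.comp continuous_snd.neg).measurable.ennreal_ofReal).indicator hWmeas
    have h1 : ∀ y : Fin n → ℝ, ENNReal.ofReal (Real.exp (-(G y)))
        = ∫⁻ s : ℝ, W.indicator
            (fun z : (Fin n → ℝ) × ℝ => ENNReal.ofReal (Real.exp (-z.2))) (y, s) := by
      intro y
      have hpt : ∀ s : ℝ, W.indicator
          (fun z : (Fin n → ℝ) × ℝ => ENNReal.ofReal (Real.exp (-z.2))) (y, s)
          = (Set.Ici (G y)).indicator
              (fun s : ℝ => ENNReal.ofReal (Real.exp (-(1 * s)))) s := by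
        intro s
        by_cases hs : G y ≤ s
        · rw [Set.indicator_of_mem (show (y, s) ∈ W from hs),
            Set.indicator_of_mem (show s ∈ Set.Ici (G y) from hs)]
          norm_num
        · rw [Set.indicator_of_notMem (show (y, s) ∉ W from hs),
            Set.indicator_of_notMem (show s ∉ Set.Ici (G y) from hs)]
      rw [lintegral_congr hpt, lintegral_indicator measurableSet_Ici, aux_lint_exp one_pos]
      norm_num
    rw [lintegral_congr h1]
    rw [lintegral_lintegral_swap (f := fun (y : Fin n → ℝ) (s : ℝ) =>
      W.indicator (fun z : (Fin n → ℝ) × ℝ => ENNReal.ofReal (Real.exp (-z.2))) (y, s))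
      hWind.aemeasurable]
    have h2 : ∀ s : ℝ, (∫⁻ y : Fin n → ℝ, W.indicator
        (fun z : (Fin n → ℝ) × ℝ => ENNReal.ofReal (Real.exp (-z.2))) (y, s))
        = ENNReal.ofReal (Real.exp (-s)) * volume {y : Fin n → ℝ | G y ≤ s} := by
      intro s
      have hpt : ∀ y : Fin n → ℝ, W.indicator
          (fun z : (Fin n → ℝ) × ℝ => ENNReal.ofReal (Real.exp (-z.2))) (y, s)
          = ({y : Fin n → ℝ | G y ≤ s}).indicator
              (fun _ => ENNReal.ofReal (Real.exp (-s))) y := by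
        intro y
        by_cases h : G y ≤ s
        · rw [Set.indicator_of_mem (show (y, s) ∈ W from h),
            Set.indicator_of_mem (show y ∈ {y : Fin n → ℝ | G y ≤ s} from h)]
        · rw [Set.indicator_of_notMem (show (y, s) ∉ W from h),
            Set.indicator_of_notMem (show y ∉ {y : Fin n → ℝ | G y ≤ s} from h)]
      rw [lintegral_congr hpt, lintegral_indicator_const
        (measurableSet_le hGcont.measurable measurable_const)]
    rw [lintegral_congr h2]
    rw [← lintegral_add_compl
      (fun s => ENNReal.ofReal (Real.exp (-s)) * volume {y : Fin n → ℝ | G y ≤ s})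
      (measurableSet_Ioi (a := (0:ℝ)))]
    have hIic : (∫⁻ s in (Set.Ioi (0:ℝ))ᶜ,
        ENNReal.ofReal (Real.exp (-s)) * volume {y : Fin n → ℝ | G y ≤ s}) = 0 := by
      rw [Set.compl_Ioi]
      rw [← Measure.restrict_congr_set Iio_ae_eq_Iic]
      rw [setLIntegral_congr_fun measurableSet_Iio (fun s hs => ?_), lintegral_zero]
      have hemp : {y : Fin n → ℝ | G y ≤ s} = ∅ := by
        rw [Set.eq_empty_iff_forall_notMem]
        intro y hy
        simp only [Set.mem_setOf_eq] at hy
        have := hGnonneg y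
        have : s < 0 := hs
        linarith [hGnonneg y, hy]
      rw [hemp]
      simp
    rw [hIic, add_zero]
    have hIoi : (∫⁻ s in Set.Ioi (0:ℝ),
        ENNReal.ofReal (Real.exp (-s)) * volume {y : Fin n → ℝ | G y ≤ s})
        = (∫⁻ s in Set.Ioi (0:ℝ), ENNReal.ofReal (Real.exp (-s) * s ^ n)) * volume Pdual := by
      rw [setLIntegral_congr_fun measurableSet_Ioi
        (fun s (hs : 0 < s) => ?_)]
      · exact lintegral_mul_const' _ _ hVfin.ne
      · rw [hVscale s hs, ENNReal.ofReal_mul (Real.exp_pos _).le, mul_assoc]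
    rw [hIoi]
    have hGam : (∫⁻ s in Set.Ioi (0:ℝ), ENNReal.ofReal (Real.exp (-s) * s ^ n))
        = ENNReal.ofReal (n.factorial : ℝ) := by
      have h0 : (0:ℝ) < (n : ℝ) + 1 := by positivity
      have hint : IntegrableOn (fun s : ℝ => Real.exp (-s) * s ^ n) (Set.Ioi 0) := by
        have := Real.GammaIntegral_convergent h0
        simp only [add_sub_cancel_right] at this
        apply this.congr_fun ?_ measurableSet_Ioi
        intro s hs
        simp only [Real.rpow_natCast]
      rw [← ofReal_integral_eq_lintegral_ofReal hint
        ((ae_restrict_iff' measurableSet_Ioi).2 (ae_of_all _ fun s (hs : s ∈ Set.Ioi 0) => by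
          have hs' : 0 < s := hs
          positivity))]
      congr 1
      have hg := Real.Gamma_eq_integral h0
      have hg2 : Real.Gamma ((n : ℝ) + 1) = (n.factorial : ℝ) := by
        exact_mod_cast Real.Gamma_nat_eq_factorial n
      simp only [add_sub_cancel_right] at hg
      rw [hg2] at hg
      rw [hg]
      refine setIntegral_congr_fun measurableSet_Ioi fun s hs => ?_
      simp only [Real.rpow_natCast]
    rw [hGam]
  rw [hstepA, main]
  have hvprod : (0:ℝ) < ∏ j, v j := Finset.prod_pos fun j _ => hv j
  rw [ENNReal.toReal_mul, ENNReal.toReal_mul, ENNReal.toReal_ofReal (by positivity),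
    ENNReal.toReal_ofReal (by positivity)]
  rw [← mul_assoc, ← mul_assoc, mul_inv_cancel₀ (ne_of_gt hvprod), one_mul]
end
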